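/- arXiv:1506.05350 — 11 statements merged into one kernel-verified Lean document; each statement's English description precedes it below -/
import Mathlib

section
/- Let X be a locally compact Hausdorff topological space, M a topological space, and s, t : M → X continuous open maps such that the set R := {(s(m), t(m)) : m ∈ M} ⊆ X × X is (the graph of) an equivalence relation on X and the map s×t : M → X × X, m ↦ (s(m), t(m)), is proper. Then the quotient space X/R is Hausdorff. -/
/-- Let `X` be a locally compact Hausdorff topological space, `M` a topological space, and
`s, t : M → X` continuous open maps such that the set `R = {(s m, t m) | m : M} ⊆ X × X`
is (the graph of) an equivalence relation on `X` (encoded by a setoid `r` with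
`r x y ↔ ∃ m, s m = x ∧ t m = y`), and such that the map `s × t : M → X × X` is proper
(the preimage of every compact set is compact).  Then the quotient space `X/R` is Hausdorff. -/
theorem realization_t2_of_proper
    {X M : Type*} [TopologicalSpace X] [TopologicalSpace M]
    [LocallyCompactSpace X] [T2Space X]
    (s t : M → X) (hs : Continuous s) (ht : Continuous t)
    (hso : IsOpenMap s) (hto : IsOpenMap t)
    (r : Setoid X)
    (hr : ∀ x y : X, r.r x y ↔ ∃ m : M, s m = x ∧ t m = y)
    (hproper : ∀ C : Set (X × X), IsCompact C →
      IsCompact ((fun m : M => (s m, t m)) ⁻¹' C)) :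
    T2Space (Quotient r) := by
  set F : M → X × X := fun m => (s m, t m) with hF
  have hFc : Continuous F := hs.prodMk ht
  -- The graph R = range F is closed in X × X.
  have hRclosed : IsClosed (Set.range F) := by
    rw [← isOpen_compl_iff, isOpen_iff_mem_nhds]
    intro p hp
    obtain ⟨K, hKc, hKn⟩ := exists_compact_mem_nhds p
    have hC : IsCompact (Set.range F ∩ K) := by
      have : F '' (F ⁻¹' K) = Set.range F ∩ K := by
        rw [Set.image_preimage_eq_inter_range, Set.inter_comm]
      rw [← this]
      exact ((hproper K hKc).image hFc)
    have hCcl : IsClosed (Set.range F ∩ K) := hC.isClosed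
    have hpn : (Set.range F ∩ K)ᶜ ∈ nhds p := hCcl.isOpen_compl.mem_nhds (by
      intro h; exact hp h.1)
    filter_upwards [hKn, hpn] with q hqK hqC hqR
    exact hqC ⟨hqR, hqK⟩
  -- The quotient map is open.
  have hqopen : IsOpenMap (Quotient.mk r) := by
    intro U hU
    rw [isOpen_coinduced]
    have : Quotient.mk r ⁻¹' (Quotient.mk r '' U) = t '' (s ⁻¹' U) := by
      ext x
      constructor
      · rintro ⟨u, hu, hux⟩
        have : r.r u x := Quotient.eq''.mp hux
        obtain ⟨m, hm1, hm2⟩ := (hr u x).mp this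
        exact ⟨m, by simp [hm1, hu], hm2⟩
      · rintro ⟨m, hm, hmx⟩
        refine ⟨s m, hm, Quotient.sound ?_⟩
        exact (hr (s m) x).mpr ⟨m, rfl, hmx⟩
    show IsOpen (Quotient.mk r ⁻¹' (Quotient.mk r '' U))
    rw [this]
    exact hto _ (hU.preimage hs)
  have hqcont : Continuous (Quotient.mk r) := continuous_quotient_mk'
  have hqsurj : Function.Surjective (Quotient.mk r) := Quotient.mk''_surjective
  -- The product of the quotient map with itself is an open quotient map.
  have hQM : Topology.IsQuotientMap (fun p : X × X => (Quotient.mk r p.1, Quotient.mk r p.2)) :=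
    IsOpenMap.isQuotientMap (hqopen.prodMap hqopen)
      ((hqcont.comp continuous_fst).prodMk (hqcont.comp continuous_snd))
      (fun q => by
        obtain ⟨a, ha⟩ := hqsurj q.1
        obtain ⟨b, hb⟩ := hqsurj q.2
        exact ⟨(a, b), by simp [ha, hb]⟩)
  rw [t2_iff_isClosed_diagonal]
  rw [← hQM.isClosed_preimage]
  have : (fun p : X × X => (Quotient.mk r p.1, Quotient.mk r p.2)) ⁻¹'
      (Set.diagonal (Quotient r)) = Set.range F := by
    ext ⟨x, y⟩
    simp only [Set.mem_preimage, Set.mem_diagonal_iff]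
    constructor
    · intro h
      obtain ⟨m, hm1, hm2⟩ := (hr x y).mp (Quotient.eq''.mp h)
      exact ⟨m, by simp [hF, hm1, hm2]⟩
    · rintro ⟨m, hm⟩
      have : s m = x ∧ t m = y := by
        simpa [hF, Prod.ext_iff] using hm
      exact Quotient.sound ((hr x y).mpr ⟨m, this.1, this.2⟩)
  rw [this]
  exact hRclosed
end

section
/- For every strict orbifold atlas K on a paracompact Hausdorff space Y, the footprint maps ψ_I : W_I → Y induce a homeomorphism |ψ| : |B_K| → Y from the realization of the category B_K onto Y. -/
open Set Topology

/-! ## Strict orbifold atlases (topological version)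

A strict orbifold atlas in the sense of McDuff, "Notes on Kuranishi atlases" /
"Strict orbifold atlases and weighted branched manifolds".
Charts are formalized as topological spaces (smooth structures are not encoded;
"étale" maps are local homeomorphisms). -/

/-- The product group `Γ_I = ∏_{i ∈ I} Γ_i`. -/
abbrev PiGamma {A : Type} (Γ : A → Type) (I : Finset A) : Type := (i : I) → Γ i.1

/-- Restriction (projection) homomorphism `Γ_J → Γ_I` for `I ⊆ J`. -/
def gres {A : Type} {Γ : A → Type} {I J : Finset A} (h : I ⊆ J) (γ : PiGamma Γ J) :
    PiGamma Γ I := fun i => γ ⟨i.1, h i.2⟩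

/-- Extension homomorphism `Γ_I → Γ_J` for `I ⊆ J` (putting `1` in the new slots). -/
def gext {A : Type} [DecidableEq A] {Γ : A → Type} [∀ i, Group (Γ i)] {I J : Finset A}
    (_h : I ⊆ J) (γ : PiGamma Γ I) : PiGamma Γ J :=
  fun j => if hj : j.1 ∈ I then γ ⟨j.1, hj⟩ else 1

/-- Finite groups are given the discrete topology. -/
instance piGammaTop {A : Type} (Γ : A → Type) (I : Finset A) :
    TopologicalSpace (PiGamma Γ I) := ⊥

/-- A **strict orbifold atlas** on a topological space `Y` (Definition 1.4 of the paper),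
with basic charts indexed by `A` and charts indexed by the finite subsets
`I ∈ 𝓘_Y = {I ⊆ A nonempty finite | F_I ≠ ∅}`.  For bookkeeping convenience the chart
data `W I`, `ρ I J`, … are declared for *all* finsets `I ⊆ A`; all axioms are imposed for
(pairs of) nonempty finsets, and the axiom `psi_range` forces `W I = ∅` whenever
`F_I = ∅`, so the charts with `I ∉ 𝓘_Y` carry no information. -/
structure OrbAtlas (Y : Type*) [TopologicalSpace Y] (A : Type) [DecidableEq A]
    (Γ : A → Type) [∀ i, Group (Γ i)] [∀ i, Finite (Γ i)] where
  /-- the footprints `F_i` of the basic charts -/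
  F : A → Set Y
  isOpen_F : ∀ i, IsOpen (F i)
  /-- the footprints cover `Y` -/
  cover_F : ∀ y : Y, ∃ i, y ∈ F i
  /-- the footprint cover is locally finite -/
  locFin_F : LocallyFinite F
  /-- the chart domains `W_I` -/
  W : Finset A → Type
  topW : ∀ I, TopologicalSpace (W I)
  /-- `Γ_I = ∏_{i ∈ I} Γ_i` acts on `W_I` -/
  act : ∀ I, MulAction (PiGamma Γ I) (W I)
  act_cont : ∀ (I : Finset A) (γ : PiGamma Γ I),
    letI := topW I; letI := act I; Continuous fun x : W I => γ • x
  /-- the footprint maps `ψ_I : W_I → Y` -/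
  psi : ∀ I, W I → Y
  psi_cont : ∀ I, letI := topW I; Continuous (psi I)
  /-- `ψ_I` is `Γ_I`-invariant -/
  psi_smul : ∀ (I : Finset A) (γ : PiGamma Γ I) (x : W I),
    letI := act I; psi I (γ • x) = psi I x
  /-- `ψ_I` has image the footprint `F_I = ⋂_{i ∈ I} F_i` -/
  psi_range : ∀ I : Finset A, I.Nonempty → Set.range (psi I) = ⋂ i ∈ I, F i
  /-- the fibres of `ψ_I` are exactly the `Γ_I`-orbits, so `ψ_I` induces a continuous
  bijection `W_I/Γ_I → F_I` -/
  psi_fib : ∀ I : Finset A, I.Nonempty → ∀ x y : W I,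
    psi I x = psi I y ↔ letI := act I; ∃ γ : PiGamma Γ I, γ • x = y
  /-- `ψ_I` is an open map, so the induced bijection `W_I/Γ_I → F_I` is a homeomorphism
  onto the open set `F_I` -/
  psi_open : ∀ I : Finset A, I.Nonempty → letI := topW I; IsOpenMap (psi I)
  /-- when `|I| > 1`, the subgroup `Γ_{I∖{i}} = {γ | γ_i = 1}` acts freely on `W_I` -/
  free : ∀ (I : Finset A) (i : A) (hi : i ∈ I), 1 < I.card →
    ∀ (γ : PiGamma Γ I) (x : W I), γ ⟨i, hi⟩ = 1 →
      (letI := act I; γ • x = x) → γ = 1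
  /-- the coordinate changes (covering maps) `ρ_{IJ} : W_J → W_{IJ} ⊆ W_I`, `I ⊆ J` -/
  rho : ∀ I J : Finset A, W J → W I
  rho_self : ∀ (I : Finset A) (x : W I), rho I I x = x
  rho_cont : ∀ I J : Finset A, I ⊆ J → I.Nonempty →
    letI := topW I; letI := topW J; Continuous (rho I J)
  /-- `ρ_{IJ}` is étale (a local homeomorphism) -/
  rho_etale : ∀ I J : Finset A, I ⊆ J → I.Nonempty →
    letI := topW I; letI := topW J; IsLocalHomeomorph (rho I J)
  /-- `ψ_I ∘ ρ_{IJ} = ψ_J` -/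
  psi_rho : ∀ (I J : Finset A), I ⊆ J → I.Nonempty → ∀ x : W J,
    psi I (rho I J x) = psi J x
  /-- cocycle condition `ρ_{IJ} ∘ ρ_{JK} = ρ_{IK}` -/
  rho_comp : ∀ (I J L : Finset A), I ⊆ J → J ⊆ L → I.Nonempty → ∀ x : W L,
    rho I J (rho J L x) = rho I L x
  /-- `ρ_{IJ}` is equivariant with respect to the projection `ρ^Γ_{IJ} : Γ_J → Γ_I` -/
  rho_equiv : ∀ (I J : Finset A) (h : I ⊆ J), I.Nonempty →
    ∀ (γ : PiGamma Γ J) (x : W J),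
      letI := act I; letI := act J; rho I J (γ • x) = gres h γ • rho I J x
  /-- `ρ_{IJ}` has image `W_{IJ} = ψ_I⁻¹(F_J)` -/
  rho_range : ∀ I J : Finset A, I ⊆ J → I.Nonempty →
    Set.range (rho I J) = psi I ⁻¹' (⋂ i ∈ J, F i)
  /-- the fibres of `ρ_{IJ}` are exactly the orbits of the (free) action of
  `Γ_{J∖I} = {γ : Γ_J | γ|_I = 1}`; together with `rho_etale`, `rho_range` this says
  that `ρ_{IJ}` is the quotient by the free `Γ_{J∖I}`-action followed by a
  `Γ_I`-equivariant homeomorphism `W_J/Γ_{J∖I} → W_{IJ}` -/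
  rho_fib : ∀ (I J : Finset A) (h : I ⊆ J), I.Nonempty → ∀ x y : W J,
    rho I J x = rho I J y ↔
      ∃ γ : PiGamma Γ J, (∀ (i : A) (hi : i ∈ I), γ ⟨i, h hi⟩ = 1) ∧
        (letI := act J; γ • x = y)

attribute [instance] OrbAtlas.topW OrbAtlas.act

namespace OrbAtlas

variable {Y : Type*} [TopologicalSpace Y] {A : Type} [DecidableEq A]
  {Γ : A → Type} [∀ i, Group (Γ i)] [∀ i, Finite (Γ i)]

/-- The footprint `F_I := ⋂_{i ∈ I} F_i`. -/
def FI (K : OrbAtlas Y A Γ) (I : Finset A) : Set Y := ⋂ i ∈ I, K.F i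

/-- The index set `𝓘_Y` of the atlas: nonempty finite `I ⊆ A` with `F_I ≠ ∅`. -/
def mem (K : OrbAtlas Y A Γ) (I : Finset A) : Prop := I.Nonempty ∧ (K.FI I).Nonempty

/-- The space of objects `⊔_{I ∈ 𝓘_Y} W_I` of the categories `B_K` and `G_K`. -/
abbrev Obj (K : OrbAtlas Y A Γ) : Type _ := Σ I : { I : Finset A // K.mem I }, K.W I.1

/-- The footprint map on objects. -/
def psiObj (K : OrbAtlas Y A Γ) : K.Obj → Y := fun x => K.psi x.1.1 x.2

/-- The space of morphisms `⊔_{I ⊆ J ∈ 𝓘_Y} W_J × Γ_I` of the category `B_K`. -/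
abbrev BMor (K : OrbAtlas Y A Γ) : Type _ :=
  Σ p : { p : Finset A × Finset A // K.mem p.1 ∧ K.mem p.2 ∧ p.1 ⊆ p.2 },
    K.W p.1.2 × PiGamma Γ p.1.1

/-- Constructor for morphisms of `B_K`: the morphism `(I,J,y,γ)`. -/
def mkB (K : OrbAtlas Y A Γ) (I J : Finset A) (hI : K.mem I) (hJ : K.mem J)
    (hIJ : I ⊆ J) (y : K.W J) (γ : PiGamma Γ I) : K.BMor :=
  ⟨⟨(I, J), hI, hJ, hIJ⟩, (y, γ)⟩

/-- The source map of `B_K`:  `(I,J,y,γ) ↦ (I, γ⁻¹ ρ_{IJ}(y))`. -/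
def bsrc (K : OrbAtlas Y A Γ) : K.BMor → K.Obj :=
  fun m => ⟨⟨m.1.1.1, m.1.2.1⟩, m.2.2⁻¹ • K.rho m.1.1.1 m.1.1.2 m.2.1⟩

/-- The target map of `B_K`:  `(I,J,y,γ) ↦ (J, y)`. -/
def btgt (K : OrbAtlas Y A Γ) : K.BMor → K.Obj :=
  fun m => ⟨⟨m.1.1.2, m.1.2.2.1⟩, m.2.1⟩

end OrbAtlas

namespace OrbAtlas

variable {Y : Type*} [TopologicalSpace Y] {A : Type} [DecidableEq A]
  {Γ : A → Type} [∀ i, Group (Γ i)] [∀ i, Finite (Γ i)]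

/-- The relation "there is a morphism of `B_K` from `x` to `y`" on objects; the
realization `|B_K|` is the quotient `Quot (K.bStep)` of the object space by the
equivalence relation generated by this relation, with the quotient topology. -/
def bStep (K : OrbAtlas Y A Γ) : K.Obj → K.Obj → Prop :=
  fun x y => ∃ m : K.BMor, K.bsrc m = x ∧ K.btgt m = y

/-! The map `ψ` on the object space is continuous, open and surjective, and it is constant
on morphisms. Two objects `(I, w)`, `(J, w')` with the same footprint `y` become equal in
`|B_K|`: since `y ∈ F_{I ∪ J}`, both lift along `ρ` to the chart `W_{I ∪ J}`, where their
lifts lie in one `Γ_{I ∪ J}`-orbit. So `|ψ|` is a continuous open bijection. -/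

section

variable {X Z : Type*} [TopologicalSpace X] [TopologicalSpace Z] {r : X → X → Prop}

theorem _root_.IsOpenMap.isHomeomorph_quot_lift {f : X → Z} (hr : ∀ x y, r x y → f x = f y)
    (hc : Continuous f) (ho : IsOpenMap f) (hs : Function.Surjective f)
    (hfib : ∀ x y, f x = f y → Quot.mk r x = Quot.mk r y) :
    IsHomeomorph (Quot.lift f hr) where
  continuous := continuous_quot_lift hr hc
  isOpenMap := ho.of_comp continuous_quot_mk Quot.mk_surjective
  bijective := by
    refine ⟨fun q q' hq => ?_, fun z => ?_⟩
    · induction q using Quot.ind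
      induction q' using Quot.ind
      exact hfib _ _ hq
    · obtain ⟨x, rfl⟩ := hs z
      exact ⟨Quot.mk r x, rfl⟩

end

section

variable (K : OrbAtlas Y A Γ)

theorem psiObj_eq_of_bStep {x y : K.Obj} : K.bStep x y → K.psiObj x = K.psiObj y := by
  rintro ⟨⟨⟨⟨I, J⟩, hI, -, hIJ⟩, w, γ⟩, rfl, rfl⟩
  exact (K.psi_smul I γ⁻¹ _).trans (K.psi_rho I J hIJ hI.1 w)

theorem continuous_psiObj : Continuous K.psiObj :=
  continuous_sigma fun I => K.psi_cont I.1

theorem isOpenMap_psiObj : IsOpenMap K.psiObj :=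
  isOpenMap_sigma.2 fun I => K.psi_open I.1 I.2.1

theorem psi_mem_FI {I : Finset A} (hI : I.Nonempty) (w : K.W I) : K.psi I w ∈ K.FI I := by
  rw [FI, ← K.psi_range I hI]
  exact mem_range_self w

theorem surjective_psiObj : Function.Surjective K.psiObj := by
  intro y
  obtain ⟨i, hi⟩ := K.cover_F y
  have hFI : y ∈ K.FI {i} := by rwa [FI, Finset.set_biInter_singleton]
  obtain ⟨w, hw⟩ : y ∈ range (K.psi {i}) := by
    rwa [K.psi_range {i} (Finset.singleton_nonempty i)]
  exact ⟨⟨⟨{i}, Finset.singleton_nonempty i, y, hFI⟩, w⟩, hw⟩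

theorem bStep_rho {I L : Finset A} (hI : K.mem I) (hL : K.mem L) (hIL : I ⊆ L) (z : K.W L) :
    K.bStep ⟨⟨I, hI⟩, K.rho I L z⟩ ⟨⟨L, hL⟩, z⟩ :=
  ⟨K.mkB I L hI hL hIL z 1, by
    change (⟨⟨I, hI⟩, (1 : PiGamma Γ I)⁻¹ • K.rho I L z⟩ : K.Obj) = _
    rw [inv_one, one_smul], rfl⟩

theorem bStep_smul {L : Finset A} (hL : K.mem L) (γ : PiGamma Γ L) (z : K.W L) :
    K.bStep ⟨⟨L, hL⟩, z⟩ ⟨⟨L, hL⟩, γ • z⟩ :=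
  ⟨K.mkB L L hL hL subset_rfl (γ • z) γ, by
    change (⟨⟨L, hL⟩, γ⁻¹ • K.rho L L (γ • z)⟩ : K.Obj) = _
    rw [K.rho_self, inv_smul_smul], rfl⟩

theorem mk_eq_mk_of_psi_eq {L : Finset A} (hL : K.mem L) {z z' : K.W L}
    (h : K.psi L z = K.psi L z') :
    Quot.mk K.bStep ⟨⟨L, hL⟩, z⟩ = Quot.mk K.bStep ⟨⟨L, hL⟩, z'⟩ := by
  obtain ⟨γ, rfl⟩ := (K.psi_fib L hL.1 z z').1 h
  exact Quot.sound (K.bStep_smul hL γ z)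

theorem exists_mk_eq_mk_of_subset {I L : Finset A} (hI : K.mem I) (hL : K.mem L) (hIL : I ⊆ L)
    (w : K.W I) (hw : K.psi I w ∈ K.FI L) :
    ∃ z : K.W L, Quot.mk K.bStep ⟨⟨I, hI⟩, w⟩ = Quot.mk K.bStep ⟨⟨L, hL⟩, z⟩ ∧
      K.psi L z = K.psi I w := by
  obtain ⟨z, rfl⟩ : w ∈ range (K.rho I L) := by rwa [K.rho_range I L hIL hI.1]
  exact ⟨z, Quot.sound (K.bStep_rho hI hL hIL z), (K.psi_rho I L hIL hI.1 z).symm⟩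

theorem mk_eq_mk_of_psiObj_eq {x x' : K.Obj} (h : K.psiObj x = K.psiObj x') :
    Quot.mk K.bStep x = Quot.mk K.bStep x' := by
  obtain ⟨⟨I, hI⟩, w⟩ := x
  obtain ⟨⟨J, hJ⟩, w'⟩ := x'
  change K.psi I w = K.psi J w' at h
  have hFL : K.psi I w ∈ K.FI (I ∪ J) := by
    rw [FI, Finset.set_biInter_inter]
    exact ⟨K.psi_mem_FI hI.1 w, h ▸ K.psi_mem_FI hJ.1 w'⟩
  have hL : K.mem (I ∪ J) := ⟨hI.1.mono Finset.subset_union_left, _, hFL⟩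
  obtain ⟨z, hz, hψz⟩ := K.exists_mk_eq_mk_of_subset hI hL Finset.subset_union_left w hFL
  obtain ⟨z', hz', hψz'⟩ :=
    K.exists_mk_eq_mk_of_subset hJ hL Finset.subset_union_right w' (h ▸ hFL)
  rw [hz, hz', K.mk_eq_mk_of_psi_eq hL (hψz.trans (h.trans hψz'.symm))]

end

theorem realization_homeomorph_general
    (K : OrbAtlas Y A Γ) :
    ∃ e : Quot K.bStep ≃ₜ Y, ∀ x : K.Obj, e (Quot.mk K.bStep x) = K.psiObj x := by
  have h := K.isOpenMap_psiObj.isHomeomorph_quot_lift (r := K.bStep)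
    (fun _ _ => K.psiObj_eq_of_bStep)
    K.continuous_psiObj K.surjective_psiObj fun _ _ => K.mk_eq_mk_of_psiObj_eq
  exact ⟨h.homeomorph, fun _ => rfl⟩

/-- For every strict orbifold atlas `K` on a paracompact Hausdorff space `Y`, the footprint
maps `ψ_I : W_I → Y` induce a homeomorphism `|ψ| : |B_K| → Y` from the realization of
the category `B_K` onto `Y`. -/
theorem realization_homeomorph
    [T2Space Y] [ParacompactSpace Y] (K : OrbAtlas Y A Γ) :
    ∃ e : Quot K.bStep ≃ₜ Y, ∀ x : K.Obj, e (Quot.mk K.bStep x) = K.psiObj x :=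
  realization_homeomorph_general K

end OrbAtlas
end

section
/- Let K be a strict orbifold atlas on a paracompact Hausdorff space Y and let I, J ∈ I_Y with I∪J ∈ I_Y. Define source and target on W_{I∪J} × Γ_{I∩J} (with Γ_∅ := {1}) by (s×t)(z,γ) := ((I, γ^{-1}ρ_{I(I∪J)}(z)), (J, ρ_{J(I∪J)}(z))). Then for x ∈ W_I and y ∈ W_J there exists a pair (z,γ) ∈ W_{I∪J} × Γ_{I∩J} with s(z,γ) = (I,x) and t(z,γ) = (J,y) if and only if ψ_I(x) = ψ_J(y). -/
open Set Topology

namespace OrbAtlas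

variable {Y : Type*} [TopologicalSpace Y] {A : Type} [DecidableEq A]
  {Γ : A → Type} [∀ i, Group (Γ i)] [∀ i, Finite (Γ i)]

/-- Let `K` be a strict orbifold atlas on a paracompact Hausdorff space `Y` and let
`I, J ∈ 𝓘_Y` with `I ∪ J ∈ 𝓘_Y`.  Define source and target on `W_{I∪J} × Γ_{I∩J}` by
`(s×t)(z,γ) := ((I, γ⁻¹·ρ_{I(I∪J)}(z)), (J, ρ_{J(I∪J)}(z)))`, where `γ ∈ Γ_{I∩J}` acts
on `W_I` via the inclusion `Γ_{I∩J} ⊆ Γ_I`.  Then for `x ∈ W_I` and `y ∈ W_J` there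
exists a pair `(z,γ) ∈ W_{I∪J} × Γ_{I∩J}` with `s(z,γ) = (I,x)` and `t(z,γ) = (J,y)`
if and only if `ψ_I(x) = ψ_J(y)`. -/
theorem exists_gMor_iff_psi_eq
    [T2Space Y] [ParacompactSpace Y] (K : OrbAtlas Y A Γ)
    (I J : Finset A) (hI : K.mem I) (hJ : K.mem J) (hIJ : K.mem (I ∪ J))
    (x : K.W I) (y : K.W J) :
    (∃ (z : K.W (I ∪ J)) (γ : PiGamma Γ (I ∩ J)),
        (gext Finset.inter_subset_left γ)⁻¹ • K.rho I (I ∪ J) z = x ∧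
        K.rho J (I ∪ J) z = y) ↔
      K.psi I x = K.psi J y := by
  have hsubI : I ⊆ I ∪ J := Finset.subset_union_left
  have hsubJ : J ⊆ I ∪ J := Finset.subset_union_right
  constructor
  · rintro ⟨z, γ, rfl, rfl⟩
    rw [K.psi_smul, K.psi_rho I (I ∪ J) hsubI hI.1, ← K.psi_rho J (I ∪ J) hsubJ hJ.1]
  · intro h
    have hxmem : x ∈ Set.range (K.rho I (I ∪ J)) := by
      rw [K.rho_range I (I ∪ J) hsubI hI.1]
      simp only [Set.mem_preimage, Set.mem_iInter, Finset.mem_union]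
      rintro i (hi | hi)
      · have hx : K.psi I x ∈ Set.range (K.psi I) := ⟨x, rfl⟩
        rw [K.psi_range I hI.1] at hx
        exact Set.mem_iInter₂.mp hx i hi
      · have hy : K.psi J y ∈ Set.range (K.psi J) := ⟨y, rfl⟩
        rw [K.psi_range J hJ.1] at hy
        rw [h]
        exact Set.mem_iInter₂.mp hy i hi
    obtain ⟨z₀, hz₀⟩ := hxmem
    have hψ : K.psi J (K.rho J (I ∪ J) z₀) = K.psi J y := by
      rw [K.psi_rho J (I ∪ J) hsubJ hJ.1, ← K.psi_rho I (I ∪ J) hsubI hI.1, hz₀, h]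
    obtain ⟨δ, hδ⟩ := (K.psi_fib J hJ.1 _ _).mp hψ
    refine ⟨gext hsubJ δ • z₀, gres Finset.inter_subset_right δ, ?_, ?_⟩
    · rw [K.rho_equiv I (I ∪ J) hsubI hI.1, hz₀, inv_smul_eq_iff]
      have hg : gext (Finset.inter_subset_left : I ∩ J ⊆ I)
            (gres Finset.inter_subset_right δ)
          = gres hsubI (gext hsubJ δ) := by
        funext i
        by_cases hij : i.1 ∈ J
        · simp [gext, gres, hij, Finset.mem_inter, i.2]
        · simp [gext, gres, hij, Finset.mem_inter]
      rw [hg]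
    · rw [K.rho_equiv J (I ∪ J) hsubJ hJ.1]
      have hg : gres hsubJ (gext hsubJ δ) = δ := by
        funext j
        simp [gres, gext, j.2]
      rw [hg, hδ]

end OrbAtlas
end

section
/- Let K be a strict orbifold atlas on a paracompact Hausdorff space Y and let I, J, K ∈ I_Y with I∪J∪K ∈ I_Y. Then the map W_{I∪J∪K} → W_{I∪J} × W_{J∪K}, v ↦ (ρ_{(I∪J)(I∪J∪K)}(v), ρ_{(J∪K)(I∪J∪K)}(v)), is injective with image exactly the fiber product {(a,b) ∈ W_{I∪J} × W_{J∪K} : ρ_{(J∪(I∩K))(I∪J)}(a) = ρ_{(J∪(I∩K))(J∪K)}(b)}; that is, the commutative square of covering maps exhibits W_{I∪J∪K} as the fiber product of W_{I∪J} and W_{J∪K} over W_{J∪(I∩K)} = W_{(I∪J)∩(J∪K)}. -/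
open Set Topology

namespace OrbAtlas

variable {Y : Type*} [TopologicalSpace Y] {A : Type} [DecidableEq A]
  {Γ : A → Type} [∀ i, Group (Γ i)] [∀ i, Finite (Γ i)]

/-- Let `𝒦` be a strict orbifold atlas on a paracompact Hausdorff space `Y` and let
`I, J, K ∈ 𝓘_Y` with `I ∪ J ∪ K ∈ 𝓘_Y`.  Then the map
`W_{I∪J∪K} → W_{I∪J} × W_{J∪K}`, `v ↦ (ρ_{(I∪J)(I∪J∪K)}(v), ρ_{(J∪K)(I∪J∪K)}(v))`,
is injective with image exactly the fiber product
`{(a,b) : ρ_{(J∪(I∩K))(I∪J)}(a) = ρ_{(J∪(I∩K))(J∪K)}(b)}`; that is, the commutative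
square of covering maps exhibits `W_{I∪J∪K}` as the fiber product of `W_{I∪J}` and
`W_{J∪K}` over `W_{J∪(I∩K)} = W_{(I∪J)∩(J∪K)}`. -/
theorem fiberProduct_of_coverings
    [T2Space Y] [ParacompactSpace Y] (𝒦 : OrbAtlas Y A Γ)
    (I J K : Finset A) (hI : 𝒦.mem I) (hJ : 𝒦.mem J) (hK : 𝒦.mem K)
    (hIJK : 𝒦.mem (I ∪ J ∪ K)) :
    Function.Injective
      (fun v : 𝒦.W (I ∪ J ∪ K) =>
        (𝒦.rho (I ∪ J) (I ∪ J ∪ K) v, 𝒦.rho (J ∪ K) (I ∪ J ∪ K) v)) ∧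
    Set.range
      (fun v : 𝒦.W (I ∪ J ∪ K) =>
        (𝒦.rho (I ∪ J) (I ∪ J ∪ K) v, 𝒦.rho (J ∪ K) (I ∪ J ∪ K) v)) =
      {p : 𝒦.W (I ∪ J) × 𝒦.W (J ∪ K) |
        𝒦.rho (J ∪ I ∩ K) (I ∪ J) p.1 = 𝒦.rho (J ∪ I ∩ K) (J ∪ K) p.2} := by
  set L := I ∪ J ∪ K with hL
  set M := J ∪ I ∩ K with hM
  obtain ⟨j0, hj0⟩ := hJ.1
  have hjL : j0 ∈ L := by simp [hL, hj0]
  have hIJsub : I ∪ J ⊆ L := Finset.subset_union_left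
  have hJKsub : J ∪ K ⊆ L := by
    intro x hx
    rcases Finset.mem_union.1 hx with h | h
    · exact Finset.mem_union_left _ (Finset.mem_union_right _ h)
    · exact Finset.mem_union_right _ h
  have hM1 : M ⊆ I ∪ J := by
    intro x hx
    rcases Finset.mem_union.1 hx with h | h
    · exact Finset.mem_union_right _ h
    · exact Finset.mem_union_left _ (Finset.mem_inter.1 h).1
  have hM2 : M ⊆ J ∪ K := by
    intro x hx
    rcases Finset.mem_union.1 hx with h | h
    · exact Finset.mem_union_left _ h
    · exact Finset.mem_union_right _ (Finset.mem_inter.1 h).2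
  have hIJne : (I ∪ J).Nonempty := ⟨j0, Finset.mem_union_right _ hj0⟩
  have hJKne : (J ∪ K).Nonempty := ⟨j0, Finset.mem_union_left _ hj0⟩
  have hMne : M.Nonempty := ⟨j0, Finset.mem_union_left _ hj0⟩
  constructor
  · -- injectivity
    intro v w hvw
    have h1 : 𝒦.rho (I ∪ J) L v = 𝒦.rho (I ∪ J) L w := congrArg Prod.fst hvw
    have h2 : 𝒦.rho (J ∪ K) L v = 𝒦.rho (J ∪ K) L w := congrArg Prod.snd hvw
    obtain ⟨γ, hγ1, hγ2⟩ := (𝒦.rho_fib (I ∪ J) L hIJsub hIJne v w).1 h1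
    obtain ⟨δ, hδ1, hδ2⟩ := (𝒦.rho_fib (J ∪ K) L hJKsub hJKne v w).1 h2
    by_cases hcard : 1 < L.card
    · -- use freeness at j0 ∈ J to show γ = δ, then γ = 1
      have hεv : (δ⁻¹ * γ) • v = v := by
        rw [mul_smul, hγ2, ← hδ2, inv_smul_smul]
      have hε1 : (δ⁻¹ * γ) ⟨j0, hjL⟩ = 1 := by
        have e1 : γ ⟨j0, hjL⟩ = 1 := hγ1 j0 (Finset.mem_union_right _ hj0)
        have e2 : δ ⟨j0, hjL⟩ = 1 := hδ1 j0 (Finset.mem_union_left _ hj0)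
        show (δ ⟨j0, hjL⟩)⁻¹ * γ ⟨j0, hjL⟩ = 1
        rw [e1, e2]; simp
      have hεδ : δ⁻¹ * γ = 1 := 𝒦.free L j0 hjL hcard (δ⁻¹ * γ) v hε1 hεv
      have hγδ : γ = δ := by
        have := mul_eq_one_iff_inv_eq.1 hεδ
        simpa using this.symm
      have hγone : γ = 1 := by
        funext x
        obtain ⟨x, hx⟩ := x
        rcases Finset.mem_union.1 hx with h | h
        · exact hγ1 x h
        · rw [hγδ]; exact hδ1 x (Finset.mem_union_right _ h)
      rw [← hγ2, hγone, one_smul]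
    · -- |L| = 1, so I ∪ J = L and γ must be 1
      have hcard1 : L.card = 1 := by
        have := Finset.card_pos.2 hIJK.1
        omega
      have hEq : I ∪ J = L := Finset.eq_of_subset_of_card_le hIJsub
        (by rw [hcard1]; exact Finset.card_pos.2 hIJne)
      have hγone : γ = 1 := by
        funext x
        obtain ⟨x, hx⟩ := x
        have hx' : x ∈ I ∪ J := hEq ▸ hx
        exact hγ1 x hx'
      rw [← hγ2, hγone, one_smul]
  · -- range
    ext p
    obtain ⟨a, b⟩ := p
    constructor
    · rintro ⟨v, hv⟩
      obtain ⟨rfl, rfl⟩ : 𝒦.rho (I ∪ J) L v = a ∧ 𝒦.rho (J ∪ K) L v = b :=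
        ⟨congrArg Prod.fst hv, congrArg Prod.snd hv⟩
      show 𝒦.rho M (I ∪ J) _ = 𝒦.rho M (J ∪ K) _
      rw [𝒦.rho_comp M (I ∪ J) L hM1 hIJsub hMne v,
        𝒦.rho_comp M (J ∪ K) L hM2 hJKsub hMne v]
    · intro hp
      have hp : 𝒦.rho M (I ∪ J) a = 𝒦.rho M (J ∪ K) b := hp
      -- ψ_{I∪J}(a) lies in F_L
      have hψab : 𝒦.psi (I ∪ J) a = 𝒦.psi (J ∪ K) b := by
        rw [← 𝒦.psi_rho M (I ∪ J) hM1 hMne a, ← 𝒦.psi_rho M (J ∪ K) hM2 hMne b, hp]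
      have hψa : 𝒦.psi (I ∪ J) a ∈ ⋂ i ∈ L, 𝒦.F i := by
        have ha : 𝒦.psi (I ∪ J) a ∈ ⋂ i ∈ I ∪ J, 𝒦.F i := by
          rw [← 𝒦.psi_range (I ∪ J) hIJne]; exact mem_range_self a
        have hb : 𝒦.psi (I ∪ J) a ∈ ⋂ i ∈ J ∪ K, 𝒦.F i := by
          rw [hψab, ← 𝒦.psi_range (J ∪ K) hJKne]; exact mem_range_self b
        simp only [Set.mem_iInter] at ha hb ⊢
        intro i hi
        rcases Finset.mem_union.1 hi with h | h
        · exact ha i h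
        · exact hb i (Finset.mem_union_right _ h)
      have ha_range : a ∈ Set.range (𝒦.rho (I ∪ J) L) := by
        rw [𝒦.rho_range (I ∪ J) L hIJsub hIJne]; exact hψa
      obtain ⟨v, hv⟩ := ha_range
      -- compare images in W_M
      have hMv : 𝒦.rho M (J ∪ K) (𝒦.rho (J ∪ K) L v) = 𝒦.rho M (J ∪ K) b := by
        rw [𝒦.rho_comp M (J ∪ K) L hM2 hJKsub hMne v,
          ← 𝒦.rho_comp M (I ∪ J) L hM1 hIJsub hMne v, hv, hp]
      obtain ⟨γ, hγ1, hγ2⟩ := (𝒦.rho_fib M (J ∪ K) hM2 hMne _ b).1 hMv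
      refine ⟨gext hJKsub γ • v, ?_⟩
      have hres1 : gres hIJsub (gext hJKsub γ) = 1 := by
        funext x
        obtain ⟨x, hx⟩ := x
        simp only [gres, gext, Pi.one_apply]
        split
        · rename_i hjk
          rcases Finset.mem_union.1 hjk with h | h
          · exact hγ1 x (Finset.mem_union_left _ h)
          · rcases Finset.mem_union.1 hx with h' | h'
            · exact hγ1 x (Finset.mem_union_right _ (Finset.mem_inter.2 ⟨h', h⟩))
            · exact hγ1 x (Finset.mem_union_left _ h')
        · rfl
      have hres2 : gres hJKsub (gext hJKsub γ) = γ := by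
        funext x
        obtain ⟨x, hx⟩ := x
        simp only [gres, gext]
        rw [dif_pos hx]
      have e1 : 𝒦.rho (I ∪ J) L (gext hJKsub γ • v) = a := by
        rw [𝒦.rho_equiv (I ∪ J) L hIJsub hIJne, hres1, one_smul, hv]
      have e2 : 𝒦.rho (J ∪ K) L (gext hJKsub γ • v) = b := by
        rw [𝒦.rho_equiv (J ∪ K) L hJKsub hJKne, hres2, hγ2]
      simp only [e1, e2]

end OrbAtlas
end

section
/- Let K be a strict orbifold atlas on a paracompact Hausdorff space Y, and let (z,γ) ∈ W_{I∪J} × Γ_{I∩J} and (w,δ) ∈ W_{J∪K} × Γ_{J∩K} be composable morphisms of G_K, i.e. ρ_{J(I∪J)}(z) = δ^{-1}ρ_{J(J∪K)}(w) (which implies I∪J∪K ∈ I_Y). Write γ_{IJK} ∈ Γ_{I∩J∩K} and δ_{IJK} ∈ Γ_{I∩J∩K} for the projections of γ and δ, and γ_{IJ∖K} := γ γ_{IJK}^{-1} ∈ Γ_{(I∩J)∖K}. Then there exists a unique pair (v,α) ∈ W_{I∪J∪K} × Γ_{(I∩K)∖J} such that ρ_{(I∪J)(I∪J∪K)}(v)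 = γ_{IJ∖K}^{-1} α δ z and ρ_{(J∪K)(I∪J∪K)}(v) = γ_{IJ∖K}^{-1} w; moreover, setting v' := ρ_{(I∪K)(I∪J∪K)}(v), the morphism (v', α δ_{IJK} γ_{IJK}) ∈ W_{I∪K} × Γ_{I∩K} has source equal to the source of (z,γ) and target equal to the target of (w,δ). -/
open Set Topology

namespace OrbAtlas

variable {Y : Type*} [TopologicalSpace Y] {A : Type} [DecidableEq A]
  {Γ : A → Type} [∀ i, Group (Γ i)] [∀ i, Finite (Γ i)]

/-- Let `𝒦` be a strict orbifold atlas on a paracompact Hausdorff space `Y`, and let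
`(z,γ) ∈ W_{I∪J} × Γ_{I∩J}` and `(w,δ) ∈ W_{J∪L} × Γ_{J∩L}` be composable morphisms of
`G_𝒦`, i.e. `ρ_{J(I∪J)}(z) = δ⁻¹·ρ_{J(J∪L)}(w)`.  Write `γ_{IJL} ∈ Γ_{I∩J∩L}` and
`δ_{IJL} ∈ Γ_{I∩J∩L}` for the projections of `γ` and `δ`, and
`γ_{IJ∖L} := γ·γ_{IJL}⁻¹ ∈ Γ_{(I∩J)∖L}` (realized here as the restriction of `γ` to
`(I∩J)∖L`).  Then there exists a unique pair `(v,α) ∈ W_{I∪J∪L} × Γ_{(I∩L)∖J}` with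
`ρ_{(I∪J)(I∪J∪L)}(v) = γ_{IJ∖L}⁻¹·α·δ·z` and `ρ_{(J∪L)(I∪J∪L)}(v) = γ_{IJ∖L}⁻¹·w`;
moreover, setting `v' := ρ_{(I∪L)(I∪J∪L)}(v)`, the morphism
`(v', α·δ_{IJL}·γ_{IJL}) ∈ W_{I∪L} × Γ_{I∩L}` has source equal to the source of `(z,γ)`
and target equal to the target of `(w,δ)`.  (All group elements act via the canonical
inclusions `gext` of the subproducts into the relevant product groups.) -/
theorem composite_exists_unique
    [T2Space Y] [ParacompactSpace Y] (𝒦 : OrbAtlas Y A Γ)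
    (I J L : Finset A) (hI : 𝒦.mem I) (hJ : 𝒦.mem J) (hL : 𝒦.mem L)
    (hIJ : 𝒦.mem (I ∪ J)) (hJL : 𝒦.mem (J ∪ L)) (hIL : 𝒦.mem (I ∪ L))
    (hIJL : 𝒦.mem (I ∪ J ∪ L))
    (z : 𝒦.W (I ∪ J)) (γ : PiGamma Γ (I ∩ J))
    (w : 𝒦.W (J ∪ L)) (δ : PiGamma Γ (J ∩ L))
    (hcomp : 𝒦.rho J (I ∪ J) z =
      (gext Finset.inter_subset_left δ)⁻¹ • 𝒦.rho J (J ∪ L) w) :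
    -- the restrictions of `γ` and `δ`
    (fun γIJL : PiGamma Γ (I ∩ J ∩ L) => fun δIJL : PiGamma Γ (I ∩ J ∩ L) =>
     fun γIJmL : PiGamma Γ ((I ∩ J) \ L) =>
      -- existence and uniqueness of the pair (v, α)
      (∃! p : 𝒦.W (I ∪ J ∪ L) × PiGamma Γ ((I ∩ L) \ J),
        𝒦.rho (I ∪ J) (I ∪ J ∪ L) p.1 =
          (gext (Finset.sdiff_subset.trans
              (Finset.inter_subset_left.trans (Finset.subset_union_left : I ⊆ I ∪ J))) γIJmL)⁻¹ •
            (gext (Finset.sdiff_subset.trans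
                (Finset.inter_subset_left.trans (Finset.subset_union_left : I ⊆ I ∪ J))) p.2 •
              (gext (Finset.inter_subset_left.trans (Finset.subset_union_right : J ⊆ I ∪ J)) δ • z)) ∧
        𝒦.rho (J ∪ L) (I ∪ J ∪ L) p.1 =
          (gext (Finset.sdiff_subset.trans
              (Finset.inter_subset_right.trans (Finset.subset_union_left : J ⊆ J ∪ L))) γIJmL)⁻¹ • w) ∧
      -- source and target of the composite morphism (v', α·δ_{IJL}·γ_{IJL})
      (∀ (v : 𝒦.W (I ∪ J ∪ L)) (α : PiGamma Γ ((I ∩ L) \ J)),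
        (𝒦.rho (I ∪ J) (I ∪ J ∪ L) v =
          (gext (Finset.sdiff_subset.trans
              (Finset.inter_subset_left.trans (Finset.subset_union_left : I ⊆ I ∪ J))) γIJmL)⁻¹ •
            (gext (Finset.sdiff_subset.trans
                (Finset.inter_subset_left.trans (Finset.subset_union_left : I ⊆ I ∪ J))) α •
              (gext (Finset.inter_subset_left.trans (Finset.subset_union_right : J ⊆ I ∪ J)) δ • z))) →
        (𝒦.rho (J ∪ L) (I ∪ J ∪ L) v =
          (gext (Finset.sdiff_subset.trans
              (Finset.inter_subset_right.trans (Finset.subset_union_left : J ⊆ J ∪ L))) γIJmL)⁻¹ • w) →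
        -- source of the composite equals the source of (z,γ)
        ((gext Finset.inter_subset_left
            (gext Finset.sdiff_subset α *
             gext (Finset.inter_subset_inter Finset.inter_subset_left subset_rfl) δIJL *
             gext (Finset.inter_subset_inter Finset.inter_subset_left subset_rfl) γIJL))⁻¹ •
          𝒦.rho I (I ∪ L) (𝒦.rho (I ∪ L) (I ∪ J ∪ L) v) =
            (gext Finset.inter_subset_left γ)⁻¹ • 𝒦.rho I (I ∪ J) z) ∧
        -- target of the composite equals the target of (w,δ)
        𝒦.rho L (I ∪ L) (𝒦.rho (I ∪ L) (I ∪ J ∪ L) v) = 𝒦.rho L (J ∪ L) w))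
    (gres Finset.inter_subset_left γ)
    (gres (Finset.inter_subset_inter Finset.inter_subset_right subset_rfl) δ)
    (gres Finset.sdiff_subset γ) := by
  classical
  have hJIJ : J ⊆ I ∪ J := Finset.subset_union_right
  have hJJL : J ⊆ J ∪ L := Finset.subset_union_left
  have hIIJ : I ⊆ I ∪ J := Finset.subset_union_left
  have hLJL : L ⊆ J ∪ L := Finset.subset_union_right
  have hIIL : I ⊆ I ∪ L := Finset.subset_union_left
  have hLIL : L ⊆ I ∪ L := Finset.subset_union_right
  have hIJN : I ∪ J ⊆ I ∪ J ∪ L := Finset.subset_union_left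
  have hJLN : J ∪ L ⊆ I ∪ J ∪ L :=
    Finset.union_subset (hJIJ.trans hIJN) Finset.subset_union_right
  have hILN : I ∪ L ⊆ I ∪ J ∪ L :=
    Finset.union_subset (hIIJ.trans hIJN) Finset.subset_union_right
  have hmIJ : (I ∩ J) \ L ⊆ I ∪ J := Finset.sdiff_subset.trans (Finset.inter_subset_left.trans hIIJ)
  have hmJL : (I ∩ J) \ L ⊆ J ∪ L := Finset.sdiff_subset.trans (Finset.inter_subset_right.trans hJJL)
  have haIJ : (I ∩ L) \ J ⊆ I ∪ J := Finset.sdiff_subset.trans (Finset.inter_subset_left.trans hIIJ)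
  have hdIJ : J ∩ L ⊆ I ∪ J := Finset.inter_subset_left.trans hJIJ
  refine ⟨?_, ?_⟩
  ·
    -- existence and uniqueness
    -- ψ equality
    have hpsi : 𝒦.psi (I ∪ J) z = 𝒦.psi (J ∪ L) w := by
      have h1 := 𝒦.psi_rho J (I ∪ J) hJIJ hJ.1 z
      have h2 := 𝒦.psi_rho J (J ∪ L) hJJL hJ.1 w
      rw [hcomp, 𝒦.psi_smul] at h1
      rw [← h1, h2]
    have hwmem : 𝒦.psi (J ∪ L) w ∈ ⋂ i ∈ I ∪ J ∪ L, 𝒦.F i := by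
      have hw : 𝒦.psi (J ∪ L) w ∈ ⋂ i ∈ J ∪ L, 𝒦.F i := by
        rw [← 𝒦.psi_range _ hJL.1]; exact Set.mem_range_self _
      have hz : 𝒦.psi (I ∪ J) z ∈ ⋂ i ∈ I ∪ J, 𝒦.F i := by
        rw [← 𝒦.psi_range _ hIJ.1]; exact Set.mem_range_self _
      rw [hpsi] at hz
      simp only [Set.mem_iInter] at *
      intro i hi
      rcases Finset.mem_union.1 hi with h | h
      · exact hz i h
      · exact hw i (Finset.mem_union_right _ h)
    obtain ⟨v₀, hv₀⟩ : (gext hmJL (gres Finset.sdiff_subset γ))⁻¹ • w ∈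
        Set.range (𝒦.rho (J ∪ L) (I ∪ J ∪ L)) := by
      rw [𝒦.rho_range _ _ hJLN hJL.1]
      rw [Set.mem_preimage, 𝒦.psi_smul]
      exact hwmem
    -- compare the two candidate images in W_{I∪J} over W_J
    have hc : 𝒦.rho J (I ∪ J) (𝒦.rho (I ∪ J) (I ∪ J ∪ L) v₀)
        = 𝒦.rho J (I ∪ J) ((gext hmIJ (gres Finset.sdiff_subset γ))⁻¹ •
            (gext hdIJ δ • z)) := by
      rw [𝒦.rho_comp J (I ∪ J) (I ∪ J ∪ L) hJIJ hIJN hJ.1,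
        ← 𝒦.rho_comp J (J ∪ L) (I ∪ J ∪ L) hJJL hJLN hJ.1, hv₀,
        𝒦.rho_equiv J (J ∪ L) hJJL hJ.1,
        𝒦.rho_equiv J (I ∪ J) hJIJ hJ.1, 𝒦.rho_equiv J (I ∪ J) hJIJ hJ.1,
        hcomp, smul_smul, smul_smul]
      congr 1
      funext i
      obtain ⟨i, hi⟩ := i
      by_cases hiI : i ∈ I <;> by_cases hiL : i ∈ L <;>
        simp [gext, gres, Pi.mul_apply, Pi.inv_apply, Finset.mem_sdiff, Finset.mem_inter, hi, hiI, hiL]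
    obtain ⟨β, hβJ, hβ⟩ := (𝒦.rho_fib J (I ∪ J) hJIJ hJ.1 _ _).1 hc
    have hβJ' : ∀ i : ((I ∪ J : Finset A) : Type), i.1 ∈ J → β i = 1 := fun i h => hβJ i.1 h
    have hiIL : ∀ i : (((I ∩ L) \ J : Finset A) : Type), i.1 ∈ I ∪ J := fun i =>
      Finset.mem_union_left _ (Finset.mem_inter.1 (Finset.mem_sdiff.1 i.2).1).1
    set β' : PiGamma Γ (I ∪ J ∪ L) := fun i =>
      if h : i.1 ∈ (I ∪ J) \ L then β ⟨i.1, (Finset.mem_sdiff.1 h).1⟩ else 1 with hβ'd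
    set α : PiGamma Γ ((I ∩ L) \ J) := fun i => (β ⟨i.1, hiIL i⟩)⁻¹ with hαd
    have hE2 : 𝒦.rho (J ∪ L) (I ∪ J ∪ L) (β' • v₀) =
        (gext hmJL (gres Finset.sdiff_subset γ))⁻¹ • w := by
      rw [𝒦.rho_equiv (J ∪ L) _ hJLN hJL.1, hv₀]
      have hone : gres hJLN β' = 1 := by
        funext i; obtain ⟨i, hi⟩ := i
        rcases Finset.mem_union.1 hi with h | h
        · by_cases hiL' : i ∈ L
          · simp [hβ'd, gres, Finset.mem_sdiff, hiL']
          · simp [hβ'd, gres, Finset.mem_sdiff, hiL', Finset.mem_union, h, hβJ i h]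
        · simp [hβ'd, gres, Finset.mem_sdiff, h]
      rw [hone, one_smul]
    have hu : 𝒦.rho (I ∪ J) (I ∪ J ∪ L) v₀ =
        β⁻¹ • ((gext hmIJ (gres Finset.sdiff_subset γ))⁻¹ • (gext hdIJ δ • z)) := by
      rw [← hβ, inv_smul_smul]
    have hE1 : 𝒦.rho (I ∪ J) (I ∪ J ∪ L) (β' • v₀) =
        (gext hmIJ (gres Finset.sdiff_subset γ))⁻¹ •
          (gext haIJ α • (gext hdIJ δ • z)) := by
      rw [𝒦.rho_equiv (I ∪ J) _ hIJN hIJ.1, hu]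
      simp only [smul_smul]
      congr 1
      funext i; obtain ⟨i, hi⟩ := i
      by_cases hiI : i ∈ I <;> by_cases hiJ : i ∈ J <;> by_cases hiL : i ∈ L <;>
        simp [hβ'd, hαd, gext, gres, Pi.mul_apply, Pi.inv_apply, Finset.mem_sdiff,
          Finset.mem_inter, Finset.mem_union, hi, hiI, hiJ, hiL, hβJ'] <;>
        first
        | exact hβJ i hiJ
        | exact absurd hi (by simp [Finset.mem_union, hiI, hiJ])
    -- uniqueness of the pair
    have huniq : ∀ (v₁ : 𝒦.W (I ∪ J ∪ L)) (α₁ : PiGamma Γ ((I ∩ L) \ J))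
        (v₂ : 𝒦.W (I ∪ J ∪ L)) (α₂ : PiGamma Γ ((I ∩ L) \ J)),
        𝒦.rho (I ∪ J) (I ∪ J ∪ L) v₁ = (gext hmIJ (gres Finset.sdiff_subset γ))⁻¹ •
          (gext haIJ α₁ • (gext hdIJ δ • z)) →
        𝒦.rho (J ∪ L) (I ∪ J ∪ L) v₁ = (gext hmJL (gres Finset.sdiff_subset γ))⁻¹ • w →
        𝒦.rho (I ∪ J) (I ∪ J ∪ L) v₂ = (gext hmIJ (gres Finset.sdiff_subset γ))⁻¹ •
          (gext haIJ α₂ • (gext hdIJ δ • z)) →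
        𝒦.rho (J ∪ L) (I ∪ J ∪ L) v₂ = (gext hmJL (gres Finset.sdiff_subset γ))⁻¹ • w →
        v₁ = v₂ ∧ α₁ = α₂ := by
      intro v₁ α₁ v₂ α₂ e11 e12 e21 e22
      obtain ⟨ε, hεJL, hε⟩ := (𝒦.rho_fib (J ∪ L) (I ∪ J ∪ L) hJLN hJL.1 v₁ v₂).1
        (by rw [e12, e22])
      set γm' : PiGamma Γ (I ∪ J) := gext hmIJ (gres Finset.sdiff_subset γ) with hγm'
      set δ' : PiGamma Γ (I ∪ J) := gext hdIJ δ with hδ'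
      set a₁ : PiGamma Γ (I ∪ J) := gext haIJ α₁ with ha₁
      set a₂ : PiGamma Γ (I ∪ J) := gext haIJ α₂ with ha₂
      have h0 : 𝒦.rho (I ∪ J) (I ∪ J ∪ L) v₂ =
          gres hIJN ε • 𝒦.rho (I ∪ J) (I ∪ J ∪ L) v₁ := by
        rw [← hε, 𝒦.rho_equiv (I ∪ J) _ hIJN hIJ.1]
      rw [e11, e21] at h0
      have h4 : ((γm'⁻¹ * a₂)⁻¹ * (gres hIJN ε * (γm'⁻¹ * a₁))) • (δ' • z) = δ' • z := by
        rw [mul_smul, mul_smul, mul_smul, ← h0, ← mul_smul γm'⁻¹ a₂, inv_smul_smul]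
      have hgJ : ∀ (i : A) (hi : i ∈ I ∪ J), i ∈ J →
          ((γm'⁻¹ * a₂)⁻¹ * (gres hIJN ε * (γm'⁻¹ * a₁))) ⟨i, hi⟩ = 1 := by
        intro i hi hiJ
        have hε1 : ε ⟨i, hIJN hi⟩ = 1 := hεJL i (Finset.mem_union_left _ hiJ)
        simp [hγm', hδ', ha₁, ha₂, gres, gext, Pi.mul_apply, Pi.inv_apply,
          Finset.mem_sdiff, Finset.mem_inter, hiJ, hε1]
      have hg : ((γm'⁻¹ * a₂)⁻¹ * (gres hIJN ε * (γm'⁻¹ * a₁))) = 1 := by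
        by_cases hcard : 1 < (I ∪ J).card
        · obtain ⟨j, hjJ⟩ := hJ.1
          exact 𝒦.free (I ∪ J) j (hJIJ hjJ) hcard _ _ (hgJ j (hJIJ hjJ) hjJ) h4
        · have h1' : 1 ≤ J.card := Finset.card_pos.2 hJ.1
          have h2' : J.card ≤ (I ∪ J).card := Finset.card_le_card hJIJ
          have hJeq := Finset.eq_of_subset_of_card_le hJIJ (by omega)
          funext i; obtain ⟨i, hi⟩ := i
          exact hgJ i hi (by rw [hJeq]; exact hi)
      have hεab : gres hIJN ε = (γm'⁻¹ * a₂) * (γm'⁻¹ * a₁)⁻¹ :=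
        eq_mul_inv_iff_mul_eq.2 (inv_mul_eq_one.1 hg).symm
      have hα12 : α₁ = α₂ := by
        funext i; obtain ⟨i, hi⟩ := i
        have hiI : i ∈ I := (Finset.mem_inter.1 (Finset.mem_sdiff.1 hi).1).1
        have hiL' : i ∈ L := (Finset.mem_inter.1 (Finset.mem_sdiff.1 hi).1).2
        have hiJ : i ∉ J := (Finset.mem_sdiff.1 hi).2
        have h5 := congrFun hεab ⟨i, Finset.mem_union_left _ hiI⟩
        have hε1 : ε ⟨i, hIJN (Finset.mem_union_left _ hiI)⟩ = 1 :=
          hεJL i (Finset.mem_union_right _ hiL')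
        simp [hγm', ha₁, ha₂, gres, gext, Pi.mul_apply, Pi.inv_apply,
          Finset.mem_sdiff, Finset.mem_inter, hiI, hiL', hiJ, hi, hε1] at h5
        exact (mul_inv_eq_one.1 h5.symm).symm
      have hεone : ε = 1 := by
        funext i; obtain ⟨i, hi⟩ := i
        by_cases h : i ∈ J ∪ L
        · exact hεJL i h
        · have hiJ : i ∉ J := fun hj => h (Finset.mem_union_left _ hj)
          have hiL' : i ∉ L := fun hl => h (Finset.mem_union_right _ hl)
          have hiI : i ∈ I := by
            rcases Finset.mem_union.1 hi with h' | h'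
            · rcases Finset.mem_union.1 h' with h'' | h''
              · exact h''
              · exact absurd h'' hiJ
            · exact absurd h' hiL'
          have h5 := congrFun hεab ⟨i, Finset.mem_union_left _ hiI⟩
          simp [hγm', ha₁, ha₂, hα12, gres, gext, Pi.mul_apply, Pi.inv_apply,
            Finset.mem_sdiff, Finset.mem_inter, hiI, hiJ, hiL'] at h5
          exact h5
      refine ⟨?_, hα12⟩
      rw [← hε, hεone, one_smul]
    refine ⟨⟨β' • v₀, α⟩, ⟨hE1, hE2⟩, ?_⟩
    rintro ⟨v₂, α₂⟩ ⟨h1, h2⟩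
    obtain ⟨hv, hα⟩ := huniq v₂ α₂ (β' • v₀) α h1 h2 hE1 hE2
    exact Prod.ext hv hα

  · -- source and target
    intro v α h1 h2
    constructor
    · -- source
      rw [𝒦.rho_comp I (I ∪ L) (I ∪ J ∪ L) hIIL hILN hI.1,
        ← 𝒦.rho_comp I (I ∪ J) (I ∪ J ∪ L) hIIJ hIJN hI.1, h1,
        𝒦.rho_equiv I (I ∪ J) hIIJ hI.1, 𝒦.rho_equiv I (I ∪ J) hIIJ hI.1,
        𝒦.rho_equiv I (I ∪ J) hIIJ hI.1, smul_smul, smul_smul, smul_smul]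
      congr 1
      funext i
      obtain ⟨i, hi⟩ := i
      by_cases hiJ : i ∈ J <;> by_cases hiL : i ∈ L <;>
        simp [gext, gres, Pi.mul_apply, Pi.inv_apply, Finset.mem_sdiff, Finset.mem_inter,
          Finset.mem_union, hi, hiJ, hiL]
    · -- target
      rw [𝒦.rho_comp L (I ∪ L) (I ∪ J ∪ L) hLIL hILN hL.1,
        ← 𝒦.rho_comp L (J ∪ L) (I ∪ J ∪ L) hLJL hJLN hL.1, h2,
        𝒦.rho_equiv L (J ∪ L) hLJL hL.1]
      have hone : gres hLJL (gext hmJL (gres (Finset.sdiff_subset) γ))⁻¹ = 1 := by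
        funext i
        obtain ⟨i, hi⟩ := i
        simp [gext, gres, Pi.inv_apply, Finset.mem_sdiff, hi]
      rw [hone, one_smul]


end OrbAtlas
end

section
/- Let G₁ and G₂ be groups such that the product group G₁ × G₂ acts freely on a set X (identify G₁ and G₂ with the subgroups G₁ × {1} and {1} × G₂). Then the map X → (X/G₁) × (X/G₂) sending x to the pair of orbits ([x]_{G₁}, [x]_{G₂}) is injective, and its image is exactly the fiber product (X/G₁) ×_{X/(G₁×G₂)} (X/G₂), i.e. the set of pairs of orbits ([u]_{G₁}, [v]_{G₂}) such that u and v lie in the same G₁×G₂-orbit. -/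
/-! Freeness makes the `G₁`- and `G₂`-orbits of a point meet only in that point: if
`(g₁, 1) • x = (1, g₂) • x` then `(g₁⁻¹, g₂)` fixes `x`. Conversely, if `(g₁, g₂) • u = v`,
the point `(g₁, 1) • u` lies in the `G₁`-orbit of `u` and, being `(1, g₂⁻¹) • v`, in the
`G₂`-orbit of `v`. -/

namespace MulAction

theorem mk_orbitRel_compHom_eq_iff {M G X : Type*} [Group M] [Group G] [MulAction G X]
    (f : M →* G) (x y : X) :
    letI : MulAction M X := compHom X f
    Quotient.mk (orbitRel M X) x = Quotient.mk (orbitRel M X) y ↔ ∃ m : M, f m • y = x :=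
  Quotient.eq

variable {G₁ G₂ X : Type*} [Group G₁] [Group G₂] [MulAction (G₁ × G₂) X]

theorem eq_one_of_inl_smul_eq_inr_smul
    (hfree : ∀ (g : G₁ × G₂) (x : X), g • x = x → g = 1) {g₁ : G₁} {g₂ : G₂} {x : X}
    (h : MonoidHom.inl G₁ G₂ g₁ • x = MonoidHom.inr G₁ G₂ g₂ • x) : g₁ = 1 ∧ g₂ = 1 := by
  have hfix : ((MonoidHom.inl G₁ G₂ g₁)⁻¹ * MonoidHom.inr G₁ G₂ g₂) • x = x := by
    rw [mul_smul, ← h, inv_smul_smul]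
  simpa [Prod.ext_iff] using hfree _ x hfix

theorem inr_inv_snd_smul_smul (g : G₁ × G₂) (x : X) :
    MonoidHom.inr G₁ G₂ g.2⁻¹ • g • x = MonoidHom.inl G₁ G₂ g.1 • x := by
  rw [smul_smul]
  congr 1
  ext <;> simp

end MulAction

open MulAction in
/-- Let `G₁`, `G₂` be groups such that the product group `G₁ × G₂` acts freely on a set `X`
(we identify `G₁`, `G₂` with the subgroups `G₁ × {1}` and `{1} × G₂`, acting on `X` via
the inclusions `MonoidHom.inl`, `MonoidHom.inr`).  Then the map
`X → (X/G₁) × (X/G₂)`, `x ↦ ([x]_{G₁}, [x]_{G₂})`, is injective, and its image is exactly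
the fiber product `(X/G₁) ×_{X/(G₁×G₂)} (X/G₂)`: the set of pairs of orbits
`([u]_{G₁}, [v]_{G₂})` such that `u` and `v` lie in the same `G₁ × G₂`-orbit. -/
theorem free_product_action_fiber_product
    {G₁ G₂ X : Type*} [Group G₁] [Group G₂] [MulAction (G₁ × G₂) X]
    (hfree : ∀ (g : G₁ × G₂) (x : X), g • x = x → g = 1) :
    letI a₁ : MulAction G₁ X := MulAction.compHom X (MonoidHom.inl G₁ G₂)
    letI a₂ : MulAction G₂ X := MulAction.compHom X (MonoidHom.inr G₁ G₂)
    Function.Injective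
      (fun x : X => (Quotient.mk (MulAction.orbitRel G₁ X) x,
                     Quotient.mk (MulAction.orbitRel G₂ X) x)) ∧
    Set.range
      (fun x : X => (Quotient.mk (MulAction.orbitRel G₁ X) x,
                     Quotient.mk (MulAction.orbitRel G₂ X) x)) =
      {p : Quotient (MulAction.orbitRel G₁ X) × Quotient (MulAction.orbitRel G₂ X) |
        ∃ u v : X, Quotient.mk (MulAction.orbitRel G₁ X) u = p.1 ∧
          Quotient.mk (MulAction.orbitRel G₂ X) v = p.2 ∧
          ∃ g : G₁ × G₂, g • u = v} := by
  refine ⟨fun x y hxy => ?_, Set.ext fun p => ⟨?_, ?_⟩⟩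
  · obtain ⟨h₁, h₂⟩ := Prod.ext_iff.1 hxy
    obtain ⟨g₁, rfl⟩ := (mk_orbitRel_compHom_eq_iff _ x y).1 h₁
    obtain ⟨g₂, hg₂⟩ := (mk_orbitRel_compHom_eq_iff _ _ y).1 h₂
    rw [(eq_one_of_inl_smul_eq_inr_smul hfree hg₂.symm).1, map_one, one_smul]
  · rintro ⟨x, rfl⟩
    exact ⟨x, x, rfl, rfl, 1, one_smul _ x⟩
  · rintro ⟨u, v, h₁, h₂, g, rfl⟩
    refine ⟨MonoidHom.inl G₁ G₂ g.1 • u, Prod.ext ?_ ?_⟩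
    · exact ((mk_orbitRel_compHom_eq_iff _ _ u).2 ⟨g.1, rfl⟩).trans h₁
    · exact ((mk_orbitRel_compHom_eq_iff _ _ (g • u)).2
        ⟨g.2⁻¹, inr_inv_snd_smul_smul g u⟩).trans h₂
end

section
/- The data B_S form a well-defined category: the composition m_S((γ_J S, δ_I), (γ_K S, δ_J)) := (γ_K S, (δ_J|_I)δ_I), defined for I ⊆ J ⊆ K whenever γ_J S = δ_J^{-1}(γ_K|_J)S, is well defined (independent of the chosen coset representatives), is compatible with the source and target maps, is associative, and the morphisms (γ_I S, 1) are identities. -/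
set_option linter.unusedSectionVars false
section BS

variable {A : Type} [Fintype A] {Γ : A → Type} [∀ i, Group (Γ i)] [∀ i, Finite (Γ i)]

theorem gres_mul {I J : Finset A} (h : I ⊆ J) (a b : PiGamma Γ J) :
    gres h (a * b) = gres h a * gres h b := rfl

theorem gres_one {I J : Finset A} (h : I ⊆ J) :
    gres (Γ := Γ) h 1 = 1 := rfl

/-- The free right action of `S ≤ Γ_A` on `Γ_I`, `γ · s := γ (s|_I)`, as a setoid whose
quotient is the orbit space `Γ_I/S`. -/
def relS (S : Subgroup (PiGamma Γ Finset.univ)) (I : Finset A) :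
    Setoid (PiGamma Γ I) where
  r γ γ' := ∃ s : S, γ * gres (Finset.subset_univ I) (s : PiGamma Γ Finset.univ) = γ'
  iseqv := by
    constructor
    · intro γ; exact ⟨1, by ext i; simp [gres]⟩
    · rintro γ γ' ⟨s, rfl⟩
      exact ⟨s⁻¹, by ext i; simp [gres, mul_assoc]⟩
    · rintro γ γ' γ'' ⟨s, rfl⟩ ⟨t, rfl⟩
      exact ⟨s * t, by ext i; simp [gres, mul_assoc]⟩

/-- The orbit space `Γ_I/S`. -/
abbrev WS (S : Subgroup (PiGamma Γ Finset.univ)) (I : Finset A) : Type :=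
  Quotient (relS S I)

end BS

section Stmt9

variable {A : Type} [Fintype A] {Γ : A → Type} [∀ i, Group (Γ i)] [∀ i, Finite (Γ i)]

/-- The data `B_S` form a well-defined category.  Objects are the cosets `γ_I S ∈ Γ_I/S`
(for nonempty `I ⊆ A`), a morphism `(γ_J S, δ_I)` has source `(I, δ_I⁻¹(γ_J|_I)S)` and
target `(J, γ_J S)`, and the composition
`m_S((γ_J S, δ_I), (γ_K S, δ_J)) := (γ_K S, (δ_J|_I)·δ_I)`, defined for `I ⊆ J ⊆ K`
whenever `γ_J S = δ_J⁻¹ (γ_K|_J) S`, is well defined (independent of the chosen coset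
representatives: both the composability condition and the source map descend to the
quotients), is compatible with the source and target maps, is associative, and the
morphisms `(γ_I S, 1)` are identities. -/
theorem bS_category_wellDefined
    (S : Subgroup (PiGamma Γ Finset.univ))
    (hinj : ∀ i : A, Function.Injective
      (fun s : S => (s : PiGamma Γ Finset.univ) ⟨i, Finset.mem_univ i⟩)) :
    -- the composability condition is independent of the coset representatives
    (∀ (J K : Finset A) (hJK : J ⊆ K) (γJ γJ' : PiGamma Γ J) (γK γK' : PiGamma Γ K)
        (δJ : PiGamma Γ J),
      Quotient.mk (relS S J) γJ = Quotient.mk (relS S J) γJ' →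
      Quotient.mk (relS S K) γK = Quotient.mk (relS S K) γK' →
      (Quotient.mk (relS S J) γJ = Quotient.mk (relS S J) (δJ⁻¹ * gres hJK γK) ↔
       Quotient.mk (relS S J) γJ' = Quotient.mk (relS S J) (δJ⁻¹ * gres hJK γK'))) ∧
    -- the source map descends to the quotient
    (∀ (I J : Finset A) (hIJ : I ⊆ J) (δI : PiGamma Γ I) (γJ γJ' : PiGamma Γ J),
      Quotient.mk (relS S J) γJ = Quotient.mk (relS S J) γJ' →
      Quotient.mk (relS S I) (δI⁻¹ * gres hIJ γJ) =
        Quotient.mk (relS S I) (δI⁻¹ * gres hIJ γJ')) ∧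
    -- compatibility of the composition with the source map (target is immediate)
    (∀ (I J K : Finset A) (hIJ : I ⊆ J) (hJK : J ⊆ K)
        (γJ : PiGamma Γ J) (γK : PiGamma Γ K) (δI : PiGamma Γ I) (δJ : PiGamma Γ J),
      Quotient.mk (relS S J) γJ = Quotient.mk (relS S J) (δJ⁻¹ * gres hJK γK) →
      Quotient.mk (relS S I) ((gres hIJ δJ * δI)⁻¹ * gres (hIJ.trans hJK) γK) =
        Quotient.mk (relS S I) (δI⁻¹ * gres hIJ γJ)) ∧
    -- associativity
    (∀ (I J K L : Finset A) (hIJ : I ⊆ J) (hJK : J ⊆ K) (hKL : K ⊆ L)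
        (γJ : PiGamma Γ J) (γK : PiGamma Γ K) (γL : PiGamma Γ L)
        (δI : PiGamma Γ I) (δJ : PiGamma Γ J) (δK : PiGamma Γ K),
      Quotient.mk (relS S J) γJ = Quotient.mk (relS S J) (δJ⁻¹ * gres hJK γK) →
      Quotient.mk (relS S K) γK = Quotient.mk (relS S K) (δK⁻¹ * gres hKL γL) →
      gres (hIJ.trans hJK) δK * (gres hIJ δJ * δI) =
        gres hIJ (gres hJK δK * δJ) * δI) ∧
    -- the morphisms (γ_I S, 1) are left identities …
    (∀ (I J : Finset A) (hIJ : I ⊆ J) (γI : PiGamma Γ I) (γJ : PiGamma Γ J)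
        (δI : PiGamma Γ I),
      Quotient.mk (relS S I) γI = Quotient.mk (relS S I) (δI⁻¹ * gres hIJ γJ) →
      gres (subset_rfl : I ⊆ I) δI * (1 : PiGamma Γ I) = δI) ∧
    -- … and right identities
    (∀ (I J : Finset A) (hIJ : I ⊆ J) (γJ γJ' : PiGamma Γ J) (δI : PiGamma Γ I),
      Quotient.mk (relS S J) γJ =
          Quotient.mk (relS S J) ((1 : PiGamma Γ J)⁻¹ * gres (subset_rfl : J ⊆ J) γJ') →
      Quotient.mk (relS S J) γJ' = Quotient.mk (relS S J) γJ ∧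
        gres hIJ (1 : PiGamma Γ J) * δI = δI) := by
  refine ⟨?_, ?_, ?_, ?_, ?_, ?_⟩
  · intro J K hJK γJ γJ' γK γK' δJ hJ hK
    obtain ⟨s, hs⟩ := Quotient.exact hJ
    obtain ⟨t, ht⟩ := Quotient.exact hK
    constructor
    · intro h
      obtain ⟨u, hu⟩ := Quotient.exact h
      refine Quotient.sound ⟨s⁻¹ * u * t, ?_⟩
      subst hs; subst ht
      ext i
      simp only [gres, Pi.mul_apply, Pi.inv_apply, Subgroup.coe_mul,
        InvMemClass.coe_inv, mul_assoc] at *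
      have := congrFun hu i
      simp only [gres, Pi.mul_apply, Pi.inv_apply, mul_assoc] at this
      rw [mul_inv_cancel_left, ← mul_assoc, this, mul_assoc]
    · intro h
      obtain ⟨u, hu⟩ := Quotient.exact h
      refine Quotient.sound ⟨s * u * t⁻¹, ?_⟩
      subst hs; subst ht
      ext i
      have := congrFun hu i
      simp only [gres, Pi.mul_apply, Pi.inv_apply, Subgroup.coe_mul,
        InvMemClass.coe_inv, mul_assoc] at this ⊢
      rw [← mul_assoc, ← mul_assoc, mul_inv_eq_iff_eq_mul]
      simpa [mul_assoc] using this
  · intro I J hIJ δI γJ γJ' h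
    obtain ⟨s, hs⟩ := Quotient.exact h
    refine Quotient.sound ⟨s, ?_⟩
    subst hs
    ext i
    simp [gres, mul_assoc]
  · intro I J K hIJ hJK γJ γK δI δJ h
    obtain ⟨s, hs⟩ := Quotient.exact h
    refine Quotient.sound ⟨s⁻¹, ?_⟩
    ext i
    have := congrFun hs ⟨i.1, hIJ i.2⟩
    simp only [gres, Pi.mul_apply, Pi.inv_apply, Subgroup.coe_mul,
      InvMemClass.coe_inv, mul_inv_rev, mul_assoc] at this ⊢
    congr 1
    rw [← mul_assoc, ← this]
    simp
  · intro I J K L hIJ hJK hKL γJ γK γL δI δJ δK _ _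
    ext i
    simp [gres, mul_assoc]
  · intro I J hIJ γI γJ δI _
    ext i
    simp [gres]
  · intro I J hIJ γJ γJ' δI h
    obtain ⟨s, hs⟩ := Quotient.exact h
    have hγ : γJ * gres (Finset.subset_univ J) (s : PiGamma Γ Finset.univ) = γJ' := by
      rw [hs]; ext i; simp [gres]
    constructor
    · refine Quotient.sound ⟨s⁻¹, ?_⟩
      rw [← hγ]
      ext i
      simp [gres, mul_assoc]
    · ext i
      simp [gres]

end Stmt9
end

section
/- The map F_S : B_id → B_S, given on objects by the quotient maps Γ_I → Γ_I/S and on morphisms by F_S(γ_I, γ_J) := (γ_J S, (γ_J|_I)γ_I^{-1}) for I ⊆ J, is a functor: it intertwines the source and target maps and satisfies m_S ∘ (F_S × F_S) = F_S ∘ m_id on composable pairs. Moreover F_S ∘ F_s = F_S for every s ∈ S, so F_S descends to the quotient and induces an isomorphism of categories B_id/S → B_S; consequently the induced inclusion B_S ≅ B_id/S ⊆ G_id/S exhibits the quotient groupoid G_id/S as a groupoid completion of B_S, i.e. an injective functor from B_S to a groupoid that is a bijection on objects, an isomorphism on stabilizer subgroups, and a bijection on realizations. -/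
set_option linter.unusedSectionVars false
section Stmt10

variable {A : Type} [Fintype A] {Γ : A → Type} [∀ i, Group (Γ i)] [∀ i, Finite (Γ i)]
variable (S : Subgroup (PiGamma Γ Finset.univ))

/-- Objects of `B_S` (and of `G_id/S`): the disjoint union of the orbit spaces `Γ_I/S`
over nonempty `I ⊆ A`. -/
abbrev BSObj : Type _ := Σ I : { I : Finset A // I.Nonempty }, WS S I.1

/-- Morphisms of `B_S`: the disjoint union over pairs `I ⊆ J` of `(Γ_J/S) × Γ_I`. -/
abbrev BSMor : Type _ :=
  Σ p : { p : Finset A × Finset A // p.1.Nonempty ∧ p.1 ⊆ p.2 },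
    WS S p.1.2 × PiGamma Γ p.1.1

/-- Source of `(γ_J S, δ_I)`: the coset `δ_I⁻¹ (γ_J|_I) S`. -/
def bsrcS : BSMor S → BSObj S := fun m =>
  ⟨⟨m.1.1.1, m.1.2.1⟩,
    Quotient.map (fun γJ => m.2.2⁻¹ * gres m.1.2.2 γJ)
      (by rintro γ γ' ⟨s, rfl⟩; exact ⟨s, by ext i; simp [gres, mul_assoc]⟩) m.2.1⟩

/-- Target of `(γ_J S, δ_I)`: the coset `γ_J S`. -/
def btgtS : BSMor S → BSObj S := fun m =>
  ⟨⟨m.1.1.2, m.1.2.1.mono m.1.2.2⟩, m.2.1⟩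

/-- Objects of `B_id` (= `B_S` for `S = 1`): the disjoint union of the `Γ_I`. -/
abbrev BidObj : Type _ := Σ I : { I : Finset A // I.Nonempty }, PiGamma Γ I.1

/-- Morphisms of `B_id` (equivalently of `G_id` from `I` to `J` with `I ⊆ J`): pairs
`(γ_I, γ_J)` with source `γ_I` and target `γ_J`. -/
abbrev BidMor : Type _ :=
  Σ p : { p : Finset A × Finset A // p.1.Nonempty ∧ p.1 ⊆ p.2 },
    PiGamma Γ p.1.1 × PiGamma Γ p.1.2

def bsrcId : BidMor (Γ := Γ) → BidObj (Γ := Γ) := fun m => ⟨⟨m.1.1.1, m.1.2.1⟩, m.2.1⟩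

def btgtId : BidMor (Γ := Γ) → BidObj (Γ := Γ) :=
  fun m => ⟨⟨m.1.1.2, m.1.2.1.mono m.1.2.2⟩, m.2.2⟩

/-- `F_S` on objects: the quotient maps `Γ_I → Γ_I/S`. -/
def FSobj : BidObj (Γ := Γ) → BSObj S := fun x => ⟨x.1, Quotient.mk (relS S x.1.1) x.2⟩

/-- `F_S` on morphisms: `(γ_I, γ_J) ↦ (γ_J S, (γ_J|_I)·γ_I⁻¹)`. -/
def FSmor : BidMor (Γ := Γ) → BSMor S := fun m =>
  ⟨m.1, (Quotient.mk (relS S m.1.1.2) m.2.2, gres m.1.2.2 m.2.2 * m.2.1⁻¹)⟩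

/-- The functor `F_s : G_id → G_id`, `γ ↦ γ·(s|)`, acting on `B_id ⊆ G_id`. -/
def FsMor (s : S) : BidMor (Γ := Γ) → BidMor (Γ := Γ) := fun m =>
  ⟨m.1, (m.2.1 * gres (Finset.subset_univ _) (s : PiGamma Γ Finset.univ),
         m.2.2 * gres (Finset.subset_univ _) (s : PiGamma Γ Finset.univ))⟩

/-- The diagonal right `S`-action on `Γ_I × Γ_J`, whose quotient is the space of
morphisms of `G_id/S` from the component `Γ_I/S` to the component `Γ_J/S`. -/
def relS2 (I J : Finset A) : Setoid (PiGamma Γ I × PiGamma Γ J) where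
  r p p' := ∃ s : S, p.1 * gres (Finset.subset_univ I) (s : PiGamma Γ Finset.univ) = p'.1
    ∧ p.2 * gres (Finset.subset_univ J) (s : PiGamma Γ Finset.univ) = p'.2
  iseqv := by
    constructor
    · intro p
      exact ⟨1, by ext i; simp [gres], by ext i; simp [gres]⟩
    · rintro p p' ⟨s, h1, h2⟩
      exact ⟨s⁻¹, by rw [← h1]; ext i; simp [gres, mul_assoc],
                  by rw [← h2]; ext i; simp [gres, mul_assoc]⟩
    · rintro p p' p'' ⟨s, h1, h2⟩ ⟨t, h3, h4⟩
      exact ⟨s * t, by rw [← h3, ← h1]; ext i; simp [gres, mul_assoc],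
                    by rw [← h4, ← h2]; ext i; simp [gres, mul_assoc]⟩

/-- Morphisms of the quotient groupoid `G_id/S`. -/
abbrev GidSMor : Type _ :=
  Σ p : { p : Finset A × Finset A // p.1.Nonempty ∧ p.2.Nonempty },
    Quotient (relS2 S p.1.1 p.1.2)

def gsrcS : GidSMor S → BSObj S := fun m =>
  ⟨⟨m.1.1.1, m.1.2.1⟩,
    Quotient.map Prod.fst (by rintro p p' ⟨s, h1, h2⟩; exact ⟨s, h1⟩) m.2⟩

def gtgtS : GidSMor S → BSObj S := fun m =>
  ⟨⟨m.1.1.2, m.1.2.2⟩,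
    Quotient.map Prod.snd (by rintro p p' ⟨s, h1, h2⟩; exact ⟨s, h2⟩) m.2⟩

/-- The inclusion `B_S → G_id/S`, `(γ_J S, δ_I) ↦ [(δ_I⁻¹·(γ_J|_I), γ_J)]`. -/
def iotaS : BSMor S → GidSMor S := fun m =>
  ⟨⟨m.1.1, ⟨m.1.2.1, m.1.2.1.mono m.1.2.2⟩⟩,
    Quotient.map (fun γJ => (m.2.2⁻¹ * gres m.1.2.2 γJ, γJ))
      (by rintro γ γ' ⟨s, rfl⟩
          exact ⟨s, by ext i; simp [gres, mul_assoc], rfl⟩) m.2.1⟩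

/-- Composition in `G_id/S`, as a relation: `[(x,y)] ∘ [(y,z)] = [(x,z)]`. -/
def IsCompGidS (m₁ m₂ m₃ : GidSMor S) : Prop :=
  ∃ (I J K : Finset A) (hI : I.Nonempty) (hJ : J.Nonempty) (hK : K.Nonempty)
    (γI : PiGamma Γ I) (γJ : PiGamma Γ J) (γK : PiGamma Γ K),
    m₁ = ⟨⟨(I, J), hI, hJ⟩, Quotient.mk (relS2 S I J) (γI, γJ)⟩ ∧
    m₂ = ⟨⟨(J, K), hJ, hK⟩, Quotient.mk (relS2 S J K) (γJ, γK)⟩ ∧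
    m₃ = ⟨⟨(I, K), hI, hK⟩, Quotient.mk (relS2 S I K) (γI, γK)⟩

/-- Identity morphisms of `G_id/S`. -/
def IsIdGidS (e : GidSMor S) : Prop :=
  ∃ (I : Finset A) (hI : I.Nonempty) (γ : PiGamma Γ I),
    e = ⟨⟨(I, I), hI, hI⟩, Quotient.mk (relS2 S I I) (γ, γ)⟩

/-- The relation generating the realization of `B_S`. -/
def stepBS (x y : BSObj S) : Prop := ∃ m : BSMor S, bsrcS S m = x ∧ btgtS S m = y

/-- The relation generating the realization of `G_id/S`. -/
def stepGidS (x y : BSObj S) : Prop := ∃ m : GidSMor S, gsrcS S m = x ∧ gtgtS S m = y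

end Stmt10

/-!
`F_S (γ_I, γ_J) = (γ_J S, (γ_J|_I) γ_I⁻¹)` retains exactly the `S`-orbit of the pair
`(γ_I, γ_J)`: the second entry is unchanged by `(γ_I s|_I, γ_J s|_J)`, and once `γ_J` is fixed
within its orbit it determines `γ_I`. Hence `F_S` is a functor, `S`-invariant, surjective, with
the `S`-orbits as fibres. Composing with the inclusion `ι`, `ι ∘ F_S` is the quotient map
`(γ_I, γ_J) ↦ [(γ_I, γ_J)]` into `G_id/S`; so `ι` is injective and reaches every morphism of
`G_id/S` from `I` to `J ⊇ I`, in particular every loop. Both realizations are a point: in `B_S`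
each `(K, γ S)` maps to `(I ∪ J, S)` by `(S, γ⁻¹)`. Composition in `G_id/S` is well defined since
`S` acts freely on each `Γ_J`.
-/

def Quot.equivOfMkEq {α : Sort*} {r r' : α → α → Prop}
    (h : ∀ ⦃x y⦄, r x y → Quot.mk r' x = Quot.mk r' y)
    (h' : ∀ ⦃x y⦄, r' x y → Quot.mk r x = Quot.mk r y) : Quot r ≃ Quot r' where
  toFun := Quot.lift (Quot.mk r') h
  invFun := Quot.lift (Quot.mk r) h'
  left_inv := Quot.ind fun _ => rfl
  right_inv := Quot.ind fun _ => rfl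

lemma mul_inv_inv_mul {G : Type*} [Group G] (a b : G) : (a * b⁻¹)⁻¹ * a = b := by
  group

section Restriction

variable {A : Type} {Γ : A → Type} [∀ i, Group (Γ i)]

lemma gres_inv {I J : Finset A} (h : I ⊆ J) (a : PiGamma Γ J) :
    gres h a⁻¹ = (gres h a)⁻¹ := rfl

lemma gres_gres {I J K : Finset A} (hIJ : I ⊆ J) (hJK : J ⊆ K) (γ : PiGamma Γ K) :
    gres hIJ (gres hJK γ) = gres (hIJ.trans hJK) γ := rfl

lemma gres_mul_inv_mul_gres_mul_inv {I J K : Finset A} (hIJ : I ⊆ J) (hJK : J ⊆ K)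
    (γI : PiGamma Γ I) (γJ : PiGamma Γ J) (γK : PiGamma Γ K) :
    gres hIJ (gres hJK γK * γJ⁻¹) * (gres hIJ γJ * γI⁻¹) = gres (hIJ.trans hJK) γK * γI⁻¹ := by
  change gres (hIJ.trans hJK) γK * (gres hIJ γJ)⁻¹ * (gres hIJ γJ * γI⁻¹) = _
  group

end Restriction

section Completion

variable {A : Type} [Fintype A] {Γ : A → Type} [∀ i, Group (Γ i)] [∀ i, Finite (Γ i)]
variable (S : Subgroup (PiGamma Γ Finset.univ))

lemma gres_coe_injective
    (hinj : ∀ i : A, Function.Injective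
      (fun s : S => (s : PiGamma Γ Finset.univ) ⟨i, Finset.mem_univ i⟩))
    {I : Finset A} (hI : I.Nonempty) :
    Function.Injective (fun s : S => gres (Finset.subset_univ I) (s : PiGamma Γ Finset.univ)) := by
  obtain ⟨i, hi⟩ := hI
  exact fun s t h => hinj i (congrFun h ⟨i, hi⟩)

lemma relS_mk_mul_gres {I : Finset A} (γ : PiGamma Γ I) (s : S) :
    Quotient.mk (relS S I) (γ * gres (Finset.subset_univ I) (s : PiGamma Γ Finset.univ)) =
      Quotient.mk (relS S I) γ :=
  Eq.symm <| Quotient.sound ⟨s, rfl⟩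

lemma bsrcS_FSmor (m : BidMor (Γ := Γ)) : bsrcS S (FSmor S m) = FSobj S (bsrcId m) := by
  obtain ⟨p, γI, γJ⟩ := m
  exact congrArg (fun γ => (⟨⟨p.1.1, p.2.1⟩, Quotient.mk _ γ⟩ : BSObj S)) (mul_inv_inv_mul _ _)

lemma btgtS_FSmor (m : BidMor (Γ := Γ)) : btgtS S (FSmor S m) = FSobj S (btgtId m) := rfl

lemma FSmor_composable {J K : Finset A} (hJK : J ⊆ K) (γJ : PiGamma Γ J) (γK : PiGamma Γ K) :
    Quotient.mk (relS S J) γJ =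
      Quotient.mk (relS S J) ((gres hJK γK * γJ⁻¹)⁻¹ * gres hJK γK) := by
  rw [mul_inv_inv_mul]

lemma FSobj_mul_gres (s : S) (x : BidObj (Γ := Γ)) :
    FSobj S ⟨x.1, x.2 * gres (Finset.subset_univ x.1.1) (s : PiGamma Γ Finset.univ)⟩ =
      FSobj S x :=
  congrArg (Sigma.mk x.1) (relS_mk_mul_gres S x.2 s)

lemma FSmor_FsMor (s : S) (m : BidMor (Γ := Γ)) : FSmor S (FsMor S s m) = FSmor S m := by
  obtain ⟨p, γI, γJ⟩ := m
  refine congrArg (Sigma.mk p) (Prod.ext (relS_mk_mul_gres S γJ s) ?_)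
  show gres p.2.2 (γJ * gres (Finset.subset_univ p.1.2) (s : PiGamma Γ Finset.univ)) *
      (γI * gres (Finset.subset_univ p.1.1) (s : PiGamma Γ Finset.univ))⁻¹ = gres p.2.2 γJ * γI⁻¹
  rw [gres_mul, gres_gres]
  group

lemma FSobj_surjective : Function.Surjective (FSobj S) := by
  rintro ⟨I, q⟩
  induction q using Quotient.ind with
  | _ γ => exact ⟨⟨I, γ⟩, rfl⟩

lemma FSmor_surjective : Function.Surjective (FSmor S) := by
  rintro ⟨p, q, δ⟩
  induction q using Quotient.ind with
  | _ γJ =>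
    refine ⟨⟨p, (δ⁻¹ * gres p.2.2 γJ, γJ)⟩, congrArg (Sigma.mk p) (Prod.ext rfl ?_)⟩
    show gres p.2.2 γJ * (δ⁻¹ * gres p.2.2 γJ)⁻¹ = δ
    group

lemma FSobj_eq_iff (I : Finset A) (hI : I.Nonempty) (γ γ' : PiGamma Γ I) :
    FSobj S ⟨⟨I, hI⟩, γ⟩ = FSobj S ⟨⟨I, hI⟩, γ'⟩ ↔
      ∃ s : S, γ * gres (Finset.subset_univ I) (s : PiGamma Γ Finset.univ) = γ' :=
  sigma_mk_injective.eq_iff.trans Quotient.eq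

lemma FSmor_eq_iff (p : { p : Finset A × Finset A // p.1.Nonempty ∧ p.1 ⊆ p.2 })
    (γI γI' : PiGamma Γ p.1.1) (γJ γJ' : PiGamma Γ p.1.2) :
    FSmor S ⟨p, (γI, γJ)⟩ = FSmor S ⟨p, (γI', γJ')⟩ ↔
      ∃ s : S,
        γI * gres (Finset.subset_univ p.1.1) (s : PiGamma Γ Finset.univ) = γI' ∧
        γJ * gres (Finset.subset_univ p.1.2) (s : PiGamma Γ Finset.univ) = γJ' := by
  constructor
  · intro h
    obtain ⟨hq, hδ⟩ := Prod.ext_iff.mp (eq_of_heq (Sigma.mk.inj_iff.mp h).2)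
    obtain ⟨s, rfl⟩ := Quotient.exact hq
    refine ⟨s, ?_, rfl⟩
    change gres p.2.2 γJ * γI⁻¹ =
      gres p.2.2 γJ * gres (Finset.subset_univ p.1.1) (s : PiGamma Γ Finset.univ) * γI'⁻¹ at hδ
    rw [mul_assoc, mul_right_inj, inv_eq_iff_eq_inv, mul_inv_rev, inv_inv] at hδ
    rw [hδ, inv_mul_cancel_right]
  · rintro ⟨s, rfl, rfl⟩
    exact (FSmor_FsMor S s _).symm

lemma gsrcS_iotaS (m : BSMor S) : gsrcS S (iotaS S m) = bsrcS S m := by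
  obtain ⟨p, q, δ⟩ := m
  induction q using Quotient.ind with
  | _ γJ => rfl

lemma gtgtS_iotaS (m : BSMor S) : gtgtS S (iotaS S m) = btgtS S m := by
  obtain ⟨p, q, δ⟩ := m
  induction q using Quotient.ind with
  | _ γJ => rfl

lemma iotaS_FSmor (p : { p : Finset A × Finset A // p.1.Nonempty ∧ p.1 ⊆ p.2 })
    (γI : PiGamma Γ p.1.1) (γJ : PiGamma Γ p.1.2) :
    iotaS S (FSmor S ⟨p, (γI, γJ)⟩) =
      ⟨⟨p.1, p.2.1, p.2.1.mono p.2.2⟩, Quotient.mk (relS2 S p.1.1 p.1.2) (γI, γJ)⟩ :=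
  congrArg (fun γ => (⟨⟨p.1, p.2.1, p.2.1.mono p.2.2⟩, Quotient.mk _ (γ, γJ)⟩ : GidSMor S))
    (mul_inv_inv_mul _ _)

lemma iotaS_injective : Function.Injective (iotaS S) := by
  intro m m' h
  obtain ⟨⟨⟨⟨I, J⟩, hI, hIJ⟩, γI, γJ⟩, rfl⟩ := FSmor_surjective S m
  obtain ⟨⟨⟨⟨I', J'⟩, hI', hIJ'⟩, γI', γJ'⟩, rfl⟩ := FSmor_surjective S m'
  rw [iotaS_FSmor, iotaS_FSmor] at h
  simp only [Sigma.mk.inj_iff, Subtype.mk.injEq, Prod.mk.injEq] at h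
  obtain ⟨⟨rfl, rfl⟩, h⟩ := h
  obtain ⟨s, hsI, hsJ⟩ := Quotient.exact (eq_of_heq h)
  exact (FSmor_eq_iff S _ _ _ _ _).mpr ⟨s, hsI, hsJ⟩

lemma exists_iotaS_eq_of_subset (m : GidSMor S) (h : m.1.1.1 ⊆ m.1.1.2) :
    ∃ m' : BSMor S, iotaS S m' = m := by
  obtain ⟨⟨⟨I, J⟩, hI, hJ⟩, w⟩ := m
  induction w using Quotient.ind with
  | _ p =>
    obtain ⟨α, β⟩ := p
    exact ⟨FSmor S ⟨⟨(I, J), hI, h⟩, (α, β)⟩, iotaS_FSmor S ⟨(I, J), hI, h⟩ α β⟩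

lemma iotaS_bijOn_stabilizer (x : BSObj S) : Set.BijOn (iotaS S)
    {m : BSMor S | bsrcS S m = x ∧ btgtS S m = x}
    {m : GidSMor S | gsrcS S m = x ∧ gtgtS S m = x} := by
  refine ⟨fun m ⟨hs, ht⟩ => ⟨(gsrcS_iotaS S m).trans hs, (gtgtS_iotaS S m).trans ht⟩,
    (iotaS_injective S).injOn, fun m ⟨hs, ht⟩ => ?_⟩
  have hloop : m.1.1.1 ⊆ m.1.1.2 := (congrArg (fun y : BSObj S => y.1.1) (hs.trans ht.symm)).le
  obtain ⟨m', rfl⟩ := exists_iotaS_eq_of_subset S m hloop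
  exact ⟨m', ⟨(gsrcS_iotaS S m').symm.trans hs, (gtgtS_iotaS S m').symm.trans ht⟩, rfl⟩

lemma iotaS_comp (I J K : Finset A) (hI : I.Nonempty) (hIJ : I ⊆ J) (hJK : J ⊆ K)
    (γJ : PiGamma Γ J) (γK : PiGamma Γ K) (δI : PiGamma Γ I) (δJ : PiGamma Γ J)
    (h : Quotient.mk (relS S J) γJ = Quotient.mk (relS S J) (δJ⁻¹ * gres hJK γK)) :
    IsCompGidS S
      (iotaS S ⟨⟨(I, J), hI, hIJ⟩, (Quotient.mk (relS S J) γJ, δI)⟩)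
      (iotaS S ⟨⟨(J, K), hI.mono hIJ, hJK⟩, (Quotient.mk (relS S K) γK, δJ)⟩)
      (iotaS S ⟨⟨(I, K), hI, hIJ.trans hJK⟩,
        (Quotient.mk (relS S K) γK, gres hIJ δJ * δI)⟩) := by
  obtain ⟨s, hs⟩ := Quotient.exact h
  -- represent the middle object by `δ_J⁻¹ (γ_K|_J)`, moving the first morphism along `s`
  refine ⟨I, J, K, hI, hI.mono hIJ, (hI.mono hIJ).mono hJK,
    δI⁻¹ * gres hIJ (δJ⁻¹ * gres hJK γK), δJ⁻¹ * gres hJK γK, γK, ?_, rfl, ?_⟩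
  · refine congrArg (Sigma.mk _) (Quotient.sound ⟨s, ?_, hs⟩)
    show δI⁻¹ * gres hIJ γJ * gres (Finset.subset_univ I) (s : PiGamma Γ Finset.univ) = _
    rw [mul_assoc, ← gres_gres hIJ (Finset.subset_univ J), ← gres_mul, hs]
  · refine congrArg (Sigma.mk _) (congrArg (Quotient.mk _) (Prod.ext ?_ rfl))
    show (gres hIJ δJ * δI)⁻¹ * gres (hIJ.trans hJK) γK = δI⁻¹ * gres hIJ (δJ⁻¹ * gres hJK γK)
    rw [gres_mul, gres_inv, gres_gres]
    group

lemma stepGidS_of_stepBS {x y : BSObj S} (h : stepBS S x y) : stepGidS S x y := by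
  obtain ⟨m, rfl, rfl⟩ := h
  exact ⟨iotaS S m, gsrcS_iotaS S m, gtgtS_iotaS S m⟩

lemma stepBS_mk_one {K L : Finset A} (hK : K.Nonempty) (hKL : K ⊆ L) (γ : PiGamma Γ K) :
    stepBS S ⟨⟨K, hK⟩, Quotient.mk _ γ⟩ ⟨⟨L, hK.mono hKL⟩, Quotient.mk _ 1⟩ :=
  ⟨⟨⟨(K, L), hK, hKL⟩, (Quotient.mk _ 1, γ⁻¹)⟩,
    congrArg (fun γ => (⟨⟨K, hK⟩, Quotient.mk _ γ⟩ : BSObj S))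
      (by simp only [inv_inv, gres_one, mul_one]), rfl⟩

lemma quot_stepBS_mk_eq (x y : BSObj S) : Quot.mk (stepBS S) x = Quot.mk (stepBS S) y := by
  classical
  obtain ⟨⟨I, hI⟩, q⟩ := x
  obtain ⟨⟨J, hJ⟩, r⟩ := y
  induction q using Quotient.ind with | _ α =>
  induction r using Quotient.ind with | _ β =>
  rw [Quot.sound (stepBS_mk_one S hI Finset.subset_union_left α),
    Quot.sound (stepBS_mk_one S hJ Finset.subset_union_right β)]

lemma IsCompGidS.exists_of_gtgtS_eq (m₁ m₂ : GidSMor S) (h : gtgtS S m₁ = gsrcS S m₂) :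
    ∃ m₃, IsCompGidS S m₁ m₂ m₃ := by
  obtain ⟨⟨⟨I, J⟩, hI, hJ⟩, w₁⟩ := m₁
  obtain ⟨⟨⟨J', K⟩, hJ', hK⟩, w₂⟩ := m₂
  induction w₁ using Quotient.ind with | _ p₁ =>
  induction w₂ using Quotient.ind with | _ p₂ =>
  obtain ⟨α, β⟩ := p₁
  obtain ⟨β', γ⟩ := p₂
  simp only [gtgtS, gsrcS, Sigma.mk.inj_iff, Subtype.mk.injEq] at h
  obtain ⟨rfl, h⟩ := h
  obtain ⟨s, hs⟩ := Quotient.exact (eq_of_heq h)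
  -- move the second morphism along `s⁻¹` so that it starts at `β`
  set t := gres (Finset.subset_univ K) (s : PiGamma Γ Finset.univ)
  refine ⟨⟨⟨(I, K), hI, hK⟩, Quotient.mk _ (α, γ * t⁻¹)⟩,
    I, J, K, hI, hJ, hK, α, β, γ * t⁻¹, rfl, ?_, rfl⟩
  exact congrArg (Sigma.mk _) (Eq.symm <| Quotient.sound ⟨s, hs, inv_mul_cancel_right γ t⟩)

lemma IsCompGidS.unique
    (hinj : ∀ i : A, Function.Injective
      (fun s : S => (s : PiGamma Γ Finset.univ) ⟨i, Finset.mem_univ i⟩))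
    {m₁ m₂ m₃ m₃' : GidSMor S} (h : IsCompGidS S m₁ m₂ m₃) (h' : IsCompGidS S m₁ m₂ m₃') :
    m₃ = m₃' := by
  obtain ⟨I, J, K, hI, hJ, hK, γI, γJ, γK, rfl, rfl, rfl⟩ := h
  obtain ⟨I', J', K', hI', hJ', hK', γI', γJ', γK', e₁, e₂, rfl⟩ := h'
  simp only [Sigma.mk.inj_iff, Subtype.mk.injEq, Prod.mk.injEq] at e₁ e₂
  obtain ⟨⟨rfl, rfl⟩, e₁⟩ := e₁
  obtain ⟨⟨-, rfl⟩, e₂⟩ := e₂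
  obtain ⟨s, hsI, hsJ⟩ := Quotient.exact (eq_of_heq e₁)
  obtain ⟨t, htJ, htK⟩ := Quotient.exact (eq_of_heq e₂)
  obtain rfl : s = t := gres_coe_injective S hinj hJ (mul_left_cancel (hsJ.trans htJ.symm))
  exact congrArg (Sigma.mk _) (Quotient.sound ⟨s, hsI, htK⟩)

lemma GidSMor.exists_inverse (m : GidSMor S) : ∃ m' e e' : GidSMor S,
    gsrcS S m' = gtgtS S m ∧ gtgtS S m' = gsrcS S m ∧
    IsCompGidS S m m' e ∧ IsIdGidS S e ∧ IsCompGidS S m' m e' ∧ IsIdGidS S e' := by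
  obtain ⟨⟨⟨I, J⟩, hI, hJ⟩, w⟩ := m
  induction w using Quotient.ind with | _ p =>
  obtain ⟨α, β⟩ := p
  exact ⟨⟨⟨(J, I), hJ, hI⟩, Quotient.mk _ (β, α)⟩,
    ⟨⟨(I, I), hI, hI⟩, Quotient.mk _ (α, α)⟩, ⟨⟨(J, J), hJ, hJ⟩, Quotient.mk _ (β, β)⟩,
    rfl, rfl, ⟨I, J, I, hI, hJ, hI, α, β, α, rfl, rfl, rfl⟩, ⟨I, hI, α, rfl⟩,
    ⟨J, I, J, hJ, hI, hJ, β, α, β, rfl, rfl, rfl⟩, ⟨J, hJ, β, rfl⟩⟩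

end Completion

section Stmt10Thm

variable {A : Type} [Fintype A] {Γ : A → Type} [∀ i, Group (Γ i)] [∀ i, Finite (Γ i)]

/-- The map `F_S : B_id → B_S`, given on objects by the quotient maps `Γ_I → Γ_I/S` and on
morphisms by `F_S(γ_I, γ_J) := (γ_J S, (γ_J|_I)·γ_I⁻¹)` for `I ⊆ J`, is a functor: it
intertwines the source and target maps and satisfies `m_S ∘ (F_S × F_S) = F_S ∘ m_id`
on composable pairs.  Moreover `F_S ∘ F_s = F_S` for every `s ∈ S`, so `F_S` descends to
the quotient and induces an isomorphism of categories `B_id/S → B_S`; consequently the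
induced inclusion `B_S ≅ B_id/S ⊆ G_id/S` exhibits the quotient groupoid `G_id/S` as a
groupoid completion of `B_S`: an injective functor from `B_S` to a groupoid which is a
bijection on objects (it is the identity), an isomorphism on stabilizer subgroups, and
a bijection on realizations. -/
theorem FS_functor_and_groupoid_completion
    (S : Subgroup (PiGamma Γ Finset.univ))
    (hinj : ∀ i : A, Function.Injective
      (fun s : S => (s : PiGamma Γ Finset.univ) ⟨i, Finset.mem_univ i⟩)) :
    -- F_S intertwines the source and target maps
    (∀ m : BidMor (Γ := Γ),
      bsrcS S (FSmor S m) = FSobj S (bsrcId m) ∧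
      btgtS S (FSmor S m) = FSobj S (btgtId m)) ∧
    -- m_S ∘ (F_S × F_S) = F_S ∘ m_id on composable pairs: the images are composable
    -- and the composite of the images is the image of the composite
    (∀ (I J K : Finset A) (hIJ : I ⊆ J) (hJK : J ⊆ K)
        (γI : PiGamma Γ I) (γJ : PiGamma Γ J) (γK : PiGamma Γ K),
      Quotient.mk (relS S J) γJ =
        Quotient.mk (relS S J) ((gres hJK γK * γJ⁻¹)⁻¹ * gres hJK γK) ∧
      gres hIJ (gres hJK γK * γJ⁻¹) * (gres hIJ γJ * γI⁻¹) =
        gres (hIJ.trans hJK) γK * γI⁻¹) ∧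
    -- F_S ∘ F_s = F_S for every s ∈ S
    (∀ (s : S) (m : BidMor (Γ := Γ)), FSmor S (FsMor S s m) = FSmor S m) ∧
    (∀ (s : S) (x : BidObj (Γ := Γ)),
      FSobj S ⟨x.1, x.2 * gres (Finset.subset_univ x.1.1) (s : PiGamma Γ Finset.univ)⟩ =
        FSobj S x) ∧
    -- F_S descends to an isomorphism B_id/S → B_S: it is surjective on objects and
    -- morphisms, and its fibres are exactly the S-orbits
    Function.Surjective (FSobj S) ∧ Function.Surjective (FSmor S) ∧
    (∀ (I : Finset A) (hI : I.Nonempty) (γ γ' : PiGamma Γ I),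
      FSobj S ⟨⟨I, hI⟩, γ⟩ = FSobj S ⟨⟨I, hI⟩, γ'⟩ ↔
        ∃ s : S, γ * gres (Finset.subset_univ I) (s : PiGamma Γ Finset.univ) = γ') ∧
    (∀ (p : { p : Finset A × Finset A // p.1.Nonempty ∧ p.1 ⊆ p.2 })
        (γI γI' : PiGamma Γ p.1.1) (γJ γJ' : PiGamma Γ p.1.2),
      FSmor S ⟨p, (γI, γJ)⟩ = FSmor S ⟨p, (γI', γJ')⟩ ↔
        ∃ s : S,
          γI * gres (Finset.subset_univ p.1.1) (s : PiGamma Γ Finset.univ) = γI' ∧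
          γJ * gres (Finset.subset_univ p.1.2) (s : PiGamma Γ Finset.univ) = γJ') ∧
    -- the induced inclusion ι : B_S → G_id/S is injective, intertwines source and
    -- target (it is the identity on objects), and is a functor
    Function.Injective (iotaS S) ∧
    (∀ m : BSMor S,
      gsrcS S (iotaS S m) = bsrcS S m ∧ gtgtS S (iotaS S m) = btgtS S m) ∧
    (∀ (I J K : Finset A) (hI : I.Nonempty) (hIJ : I ⊆ J) (hJK : J ⊆ K)
        (γJ : PiGamma Γ J) (γK : PiGamma Γ K) (δI : PiGamma Γ I) (δJ : PiGamma Γ J),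
      Quotient.mk (relS S J) γJ = Quotient.mk (relS S J) (δJ⁻¹ * gres hJK γK) →
      IsCompGidS S
        (iotaS S ⟨⟨(I, J), hI, hIJ⟩, (Quotient.mk (relS S J) γJ, δI)⟩)
        (iotaS S ⟨⟨(J, K), hI.mono hIJ, hJK⟩, (Quotient.mk (relS S K) γK, δJ)⟩)
        (iotaS S ⟨⟨(I, K), hI, hIJ.trans hJK⟩,
          (Quotient.mk (relS S K) γK, gres hIJ δJ * δI)⟩)) ∧
    -- ι is an isomorphism on stabilizer subgroups
    (∀ x : BSObj S, Set.BijOn (iotaS S)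
      {m : BSMor S | bsrcS S m = x ∧ btgtS S m = x}
      {m : GidSMor S | gsrcS S m = x ∧ gtgtS S m = x}) ∧
    -- ι is a bijection on realizations
    (∃ e : Quot (stepBS S) ≃ Quot (stepGidS S),
      ∀ x : BSObj S, e (Quot.mk (stepBS S) x) = Quot.mk (stepGidS S) x) ∧
    -- and G_id/S is a groupoid: composition is total on composable pairs and single
    -- valued, and every morphism has a two-sided inverse up to identities
    (∀ m₁ m₂ : GidSMor S, gtgtS S m₁ = gsrcS S m₂ → ∃ m₃, IsCompGidS S m₁ m₂ m₃) ∧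
    (∀ m₁ m₂ m₃ m₃' : GidSMor S,
      IsCompGidS S m₁ m₂ m₃ → IsCompGidS S m₁ m₂ m₃' → m₃ = m₃') ∧
    (∀ m : GidSMor S, ∃ m' e e' : GidSMor S,
      gsrcS S m' = gtgtS S m ∧ gtgtS S m' = gsrcS S m ∧
      IsCompGidS S m m' e ∧ IsIdGidS S e ∧
      IsCompGidS S m' m e' ∧ IsIdGidS S e') := by
  refine ⟨fun m => ⟨bsrcS_FSmor S m, btgtS_FSmor S m⟩,
    fun I J K hIJ hJK γI γJ γK =>
      ⟨FSmor_composable S hJK γJ γK, gres_mul_inv_mul_gres_mul_inv hIJ hJK γI γJ γK⟩,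
    FSmor_FsMor S, FSobj_mul_gres S, FSobj_surjective S, FSmor_surjective S,
    FSobj_eq_iff S, FSmor_eq_iff S, iotaS_injective S,
    fun m => ⟨gsrcS_iotaS S m, gtgtS_iotaS S m⟩, iotaS_comp S, iotaS_bijOn_stabilizer S,
    ?_, IsCompGidS.exists_of_gtgtS_eq S, fun _ _ _ _ => IsCompGidS.unique S hinj,
    GidSMor.exists_inverse S⟩
  exact ⟨Quot.equivOfMkEq (fun _ _ h => Quot.sound (stepGidS_of_stepBS S h))
    (fun x y _ => quot_stepBS_mk_eq S x y), fun _ => rfl⟩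

end Stmt10Thm
end

section
/- Let Y be a compact Hausdorff space and (F_i)_{i ∈ A} a finite open cover of Y. Then there exists a cover reduction of (F_i): a family of open sets (Q_I), indexed by the nonempty subsets I of A, such that the closure of each Q_I is contained in F_I := ⋂_{i ∈ I} F_i (in particular Q_I = ∅ whenever F_I = ∅), the Q_I cover Y, and whenever closure(Q_I) ∩ closure(Q_J) ≠ ∅ one has I ⊆ J or J ⊆ I. -/
/-!
Take a bump covering `(b i)` subordinate to `(F i)`, scaled so that at every point some `b i`
takes the value `card A + 2`. At a point `y` the `card A` values `b j y` miss one of the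
`card A + 1` intervals `(m, m + 1]`, `m ≤ card A`, and the indices whose value lies above that gap
form a nonempty `I` with `y ∈ Q I`, where `Q I` is the open set on which every `b i`, `i ∈ I`,
exceeds `0` and every `b j`, `j ∉ I`, by more than `1`. On `closure (Q I)` these margins are at
least `1`, so `b i ≠ 0` there for `i ∈ I`, and for `i ∈ I \ J`, `j ∈ J \ I` a common point of
`closure (Q I)` and `closure (Q J)` would satisfy both `b j + 1 ≤ b i` and `b i + 1 ≤ b j`.
-/

open Set Function

theorem exists_forall_notMem_of_card_lt {ι A α : Type*} [Fintype ι] [Fintype A]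
    (h : Fintype.card A < Fintype.card ι) {S : ι → Set α} (hS : Pairwise (Disjoint on S))
    (x : A → α) : ∃ m, ∀ j, x j ∉ S m := by
  by_contra! hx
  choose g hg using hx
  have hg_inj : Injective g := fun m m' hmm' =>
    hS.eq (not_disjoint_iff.2 ⟨x (g m), hg m, hmm' ▸ hg m'⟩)
  exact (Fintype.card_le_of_injective g hg_inj).not_gt h

theorem exists_forall_notMem_Ioc_natCast {A : Type*} [Fintype A] (x : A → ℝ) :
    ∃ m ≤ Fintype.card A, ∀ j, x j ∉ Ioc (m : ℝ) (m + 1) := by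
  have hS : Pairwise (Disjoint on fun m : Fin (Fintype.card A + 1) => Ioc (m : ℝ) (m + 1)) := by
    intro m m' hmm'
    have hne : ((m : ℕ) : ℤ) ≠ ((m' : ℕ) : ℤ) := by exact_mod_cast Fin.val_injective.ne hmm'
    simpa only [onFun, Int.cast_natCast] using pairwise_disjoint_Ioc_intCast ℝ hne
  obtain ⟨m, hm⟩ := exists_forall_notMem_of_card_lt (by simp) hS x
  exact ⟨m, Nat.lt_succ_iff.1 m.isLt, hm⟩

section DominantSet

variable {Y A : Type*} {b : A → Y → ℝ} {I J : Finset A} {y : Y}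

def dominantSet (b : A → Y → ℝ) (I : Finset A) : Set Y :=
  {y | I.Nonempty ∧ ∀ i ∈ I, 1 < b i y ∧ ∀ j ∉ I, b j y + 1 < b i y}

@[simp]
theorem dominantSet_empty (b : A → Y → ℝ) : dominantSet b ∅ = ∅ := by
  simp [dominantSet]

theorem exists_mem_dominantSet [Fintype A] (b : A → Y → ℝ) (y : Y)
    (hy : ∃ i, (Fintype.card A : ℝ) + 1 < b i y) : ∃ I, y ∈ dominantSet b I := by
  classical
  obtain ⟨m, hm, hgap⟩ := exists_forall_notMem_Ioc_natCast fun j => b j y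
  refine ⟨Finset.univ.filter fun i => (m : ℝ) + 1 < b i y, ?_, fun i hiI => ?_⟩
  · obtain ⟨i, hi⟩ := hy
    have : (m : ℝ) ≤ Fintype.card A := by exact_mod_cast hm
    exact ⟨i, Finset.mem_filter.2 ⟨Finset.mem_univ i, by linarith⟩⟩
  have hi : (m : ℝ) + 1 < b i y := (Finset.mem_filter.1 hiI).2
  refine ⟨by linarith [m.cast_nonneg (α := ℝ)], fun j hj => ?_⟩
  have hjm : b j y ≤ m := by
    have : b j y ≤ m + 1 := by simpa using hj
    by_contra! hjm
    exact hgap j ⟨hjm, this⟩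
  linarith

variable [TopologicalSpace Y]

theorem isOpen_dominantSet [Finite A] (hb : ∀ i, Continuous (b i)) (I : Finset A) :
    IsOpen (dominantSet b I) := by
  have : dominantSet b I = {_y | I.Nonempty} ∩
      ⋂ i ∈ I, ({y | 1 < b i y} ∩ ⋂ j ∈ (I : Set A)ᶜ, {y | b j y + 1 < b i y}) := by
    ext y
    simp [dominantSet]
  rw [this]
  refine isOpen_const.inter (isOpen_biInter_finset fun i _ => ?_)
  exact (isOpen_lt continuous_const (hb i)).inter <| (Set.toFinite _).isOpen_biInter
    fun j _ => isOpen_lt ((hb j).add continuous_const) (hb i)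

theorem one_le_of_mem_closure_dominantSet (hb : ∀ i, Continuous (b i))
    (hy : y ∈ closure (dominantSet b I)) {i : A} (hi : i ∈ I) : 1 ≤ b i y := by
  refine closure_lt_subset_le continuous_const (hb i) (closure_mono ?_ hy)
  exact fun z hz => (hz.2 i hi).1

theorem add_one_le_of_mem_closure_dominantSet (hb : ∀ i, Continuous (b i))
    (hy : y ∈ closure (dominantSet b I)) {i j : A} (hi : i ∈ I) (hj : j ∉ I) :
    b j y + 1 ≤ b i y := by
  refine closure_lt_subset_le ((hb j).add continuous_const) (hb i) (closure_mono ?_ hy)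
  exact fun z hz => (hz.2 i hi).2 j hj

theorem closure_dominantSet_subset {F : A → Set Y} (hb : ∀ i, Continuous (b i))
    (hbF : ∀ i, tsupport (b i) ⊆ F i) : closure (dominantSet b I) ⊆ ⋂ i ∈ I, F i := by
  intro y hy
  refine mem_iInter₂.2 fun i hi => hbF i (subset_tsupport _ ?_)
  exact (zero_lt_one.trans_le (one_le_of_mem_closure_dominantSet hb hy hi)).ne'

theorem subset_or_subset_of_closure_dominantSet_inter (hb : ∀ i, Continuous (b i))
    (h : (closure (dominantSet b I) ∩ closure (dominantSet b J)).Nonempty) : I ⊆ J ∨ J ⊆ I := by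
  obtain ⟨y, hyI, hyJ⟩ := h
  by_contra! hIJ
  obtain ⟨i, hiI, hiJ⟩ := Finset.not_subset.1 hIJ.1
  obtain ⟨j, hjJ, hjI⟩ := Finset.not_subset.1 hIJ.2
  have := add_one_le_of_mem_closure_dominantSet hb hyI hiI hjI
  have := add_one_le_of_mem_closure_dominantSet hb hyJ hjJ hiJ
  linarith

end DominantSet

theorem exists_cover_reduction_general
    {Y : Type*} [TopologicalSpace Y] [CompactSpace Y] [T2Space Y]
    {A : Type*} [Fintype A]
    (F : A → Set Y) (hopen : ∀ i, IsOpen (F i)) (hcover : (⋃ i, F i) = univ) :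
    ∃ Q : Finset A → Set Y,
      (∀ I, IsOpen (Q I)) ∧
      Q ∅ = ∅ ∧
      (∀ I : Finset A, I.Nonempty → closure (Q I) ⊆ ⋂ i ∈ I, F i) ∧
      (⋃ I : Finset A, Q I) = univ ∧
      (∀ I J : Finset A, I.Nonempty → J.Nonempty →
        (closure (Q I) ∩ closure (Q J)).Nonempty → I ⊆ J ∨ J ⊆ I) := by
  obtain ⟨b, hbF⟩ := BumpCovering.exists_isSubordinate_of_locallyFinite isClosed_univ F hopen
    (locallyFinite_of_finite F) hcover.ge
  let c : A → Y → ℝ := fun i y => (Fintype.card A + 2) * b i y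
  have hc : ∀ i, Continuous (c i) := fun i => continuous_const.mul (b i).continuous
  have hcF : ∀ i, tsupport (c i) ⊆ F i := fun i => tsupport_mul_subset_right.trans (hbF i)
  have hcover_c : ∀ y, ∃ I, y ∈ dominantSet c I := fun y =>
    exists_mem_dominantSet c y ⟨b.ind y (mem_univ y), by
      simp only [c, b.ind_apply y (mem_univ y)]
      linarith⟩
  refine ⟨dominantSet c, isOpen_dominantSet hc, dominantSet_empty c,
    fun I _ => closure_dominantSet_subset hc hcF, ?_,
    fun I J _ _ => subset_or_subset_of_closure_dominantSet_inter hc⟩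
  exact eq_univ_of_forall fun y => mem_iUnion.2 (hcover_c y)

/-- Let `Y` be a compact Hausdorff space and `(F i)_{i ∈ A}` a finite open cover of `Y`.
Then there exists a cover reduction of `(F i)`: a family of open sets `Q I`, indexed by
the (nonempty) subsets `I` of `A` (with `Q ∅ = ∅`), such that the closure of each `Q I`
is contained in `F_I := ⋂_{i ∈ I} F i` (in particular `Q I = ∅` whenever `F_I = ∅`),
the `Q I` cover `Y`, and whenever `closure (Q I) ∩ closure (Q J) ≠ ∅` one has
`I ⊆ J` or `J ⊆ I`. -/
theorem exists_cover_reduction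
    {Y : Type*} [TopologicalSpace Y] [CompactSpace Y] [T2Space Y]
    {A : Type*} [Fintype A] [DecidableEq A]
    (F : A → Set Y) (hopen : ∀ i, IsOpen (F i)) (hcover : (⋃ i, F i) = univ) :
    ∃ Q : Finset A → Set Y,
      (∀ I, IsOpen (Q I)) ∧
      Q ∅ = ∅ ∧
      (∀ I : Finset A, I.Nonempty → closure (Q I) ⊆ ⋂ i ∈ I, F i) ∧
      (⋃ I : Finset A, Q I) = univ ∧
      (∀ I J : Finset A, I.Nonempty → J.Nonempty →
        (closure (Q I) ∩ closure (Q J)).Nonempty → I ⊆ J ∨ J ⊆ I) :=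
  exists_cover_reduction_general F hopen hcover
end

section
/- Let K be a strict orbifold atlas on a compact orbifold Y and V = (V_I)_{I ∈ I_Y} a reduction of K. Then the groupoid V_K is well defined: its set of morphisms contains all identity morphisms, is closed under composition in G_K, and is closed under taking inverses; in particular V_K is a nonsingular étale groupoid. -/
open Set Topology

namespace OrbAtlas

variable {Y : Type*} [TopologicalSpace Y] {A : Type} [DecidableEq A]
  {Γ : A → Type} [∀ i, Group (Γ i)] [∀ i, Finite (Γ i)]

/-- The space of morphisms `⊔ W_{I∪J} × Γ_{I∩J}` of the groupoid completion `G_K`. -/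
abbrev GMor (K : OrbAtlas Y A Γ) : Type _ :=
  Σ p : { p : Finset A × Finset A // K.mem p.1 ∧ K.mem p.2 ∧ K.mem (p.1 ∪ p.2) },
    K.W (p.1.1 ∪ p.1.2) × PiGamma Γ (p.1.1 ∩ p.1.2)

/-- Constructor for morphisms of `G_K`. -/
def mkG (K : OrbAtlas Y A Γ) (I J : Finset A) (hI : K.mem I) (hJ : K.mem J)
    (hU : K.mem (I ∪ J)) (z : K.W (I ∪ J)) (γ : PiGamma Γ (I ∩ J)) : K.GMor :=
  ⟨⟨(I, J), hI, hJ, hU⟩, (z, γ)⟩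

/-- The source map of `G_K`:  `(z,γ) ↦ (I, γ⁻¹·ρ_{I(I∪J)}(z))`. -/
def gsrc (K : OrbAtlas Y A Γ) : K.GMor → K.Obj :=
  fun m => ⟨⟨m.1.1.1, m.1.2.1⟩,
    (gext (Finset.inter_subset_left : m.1.1.1 ∩ m.1.1.2 ⊆ m.1.1.1) m.2.2)⁻¹ •
      K.rho m.1.1.1 (m.1.1.1 ∪ m.1.1.2) m.2.1⟩

/-- The target map of `G_K`:  `(z,γ) ↦ (J, ρ_{J(I∪J)}(z))`. -/
def gtgt (K : OrbAtlas Y A Γ) : K.GMor → K.Obj :=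
  fun m => ⟨⟨m.1.1.2, m.1.2.2.1⟩, K.rho m.1.1.2 (m.1.1.1 ∪ m.1.1.2) m.2.1⟩

/-- The inverse map of `G_K`:  `(z,γ) ↦ (γ⁻¹·z, γ⁻¹)`. -/
def ginv (K : OrbAtlas Y A Γ) : K.GMor → K.GMor :=
  fun m =>
    ⟨⟨(m.1.1.2, m.1.1.1),
      ⟨m.1.2.2.1, m.1.2.1, by rw [Finset.union_comm]; exact m.1.2.2.2⟩⟩,
     (cast (congrArg K.W (Finset.union_comm m.1.1.1 m.1.1.2))
        ((gext (Finset.inter_subset_union : m.1.1.1 ∩ m.1.1.2 ⊆ m.1.1.1 ∪ m.1.1.2)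
            m.2.2)⁻¹ • m.2.1),
      cast (congrArg (PiGamma Γ) (Finset.inter_comm m.1.1.1 m.1.1.2)) m.2.2⁻¹)⟩

/-- The composition of `G_K` as a relation:  `IsCompositeG K f g c` holds iff
`f = (z,γ) : W_I → W_J`, `g = (w,δ) : W_J → W_L` and
`c = (ρ_{(I∪L)(I∪J∪L)}(v), α·δ_{IJL}·γ_{IJL})` where `(v,α)` is a pair as in
Proposition 2.4(ii) of the paper. -/
def IsCompositeG (K : OrbAtlas Y A Γ) (f g c : K.GMor) : Prop :=
  ∃ (I J L : Finset A) (hI : K.mem I) (hJ : K.mem J) (hL : K.mem L)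
    (hIJ : K.mem (I ∪ J)) (hJL : K.mem (J ∪ L)) (hIL : K.mem (I ∪ L))
    (z : K.W (I ∪ J)) (γ : PiGamma Γ (I ∩ J)) (w : K.W (J ∪ L)) (δ : PiGamma Γ (J ∩ L))
    (v : K.W (I ∪ J ∪ L)) (α : PiGamma Γ ((I ∩ L) \ J)),
    f = K.mkG I J hI hJ hIJ z γ ∧
    g = K.mkG J L hJ hL hJL w δ ∧
    K.rho (I ∪ J) (I ∪ J ∪ L) v =
      (gext (Finset.sdiff_subset.trans
          (Finset.inter_subset_left.trans (Finset.subset_union_left : I ⊆ I ∪ J)))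
          (gres (Finset.sdiff_subset : (I ∩ J) \ L ⊆ I ∩ J) γ))⁻¹ •
        (gext (Finset.sdiff_subset.trans
            (Finset.inter_subset_left.trans (Finset.subset_union_left : I ⊆ I ∪ J))) α •
          (gext (Finset.inter_subset_left.trans
              (Finset.subset_union_right : J ⊆ I ∪ J)) δ • z)) ∧
    K.rho (J ∪ L) (I ∪ J ∪ L) v =
      (gext (Finset.sdiff_subset.trans
          (Finset.inter_subset_right.trans (Finset.subset_union_left : J ⊆ J ∪ L)))
          (gres (Finset.sdiff_subset : (I ∩ J) \ L ⊆ I ∩ J) γ))⁻¹ • w ∧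
    c = K.mkG I L hI hL hIL (K.rho (I ∪ L) (I ∪ J ∪ L) v)
      (gext Finset.sdiff_subset α *
       gext (Finset.inter_subset_inter Finset.inter_subset_left subset_rfl)
         (gres (Finset.inter_subset_inter Finset.inter_subset_right subset_rfl) δ) *
       gext (Finset.inter_subset_inter Finset.inter_subset_left subset_rfl)
         (gres Finset.inter_subset_left γ))

/-- The inclusion functor `B_K → G_K` (the identity on objects). -/
def iotaBG (K : OrbAtlas Y A Γ) : K.BMor → K.GMor :=
  fun m =>
    ⟨⟨(m.1.1.1, m.1.1.2),
      ⟨m.1.2.1, m.1.2.2.1, by rw [Finset.union_eq_right.mpr m.1.2.2.2]; exact m.1.2.2.1⟩⟩,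
     (cast (congrArg K.W (Finset.union_eq_right.mpr m.1.2.2.2).symm) m.2.1,
      cast (congrArg (PiGamma Γ) (Finset.inter_eq_left.mpr m.1.2.2.2).symm) m.2.2)⟩

/-- The relation on objects generating the realization `|G_K|`. -/
def gStep (K : OrbAtlas Y A Γ) : K.Obj → K.Obj → Prop :=
  fun x y => ∃ m : K.GMor, K.gsrc m = x ∧ K.gtgt m = y

end OrbAtlas

namespace OrbAtlas

variable {Y : Type*} [TopologicalSpace Y] {A : Type} [DecidableEq A]
  {Γ : A → Type} [∀ i, Group (Γ i)] [∀ i, Finite (Γ i)]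

/-- Given a cover reduction `Q` of the footprint cover, the objects of the reduced
groupoid `V_K` are the points of the sets `V_I = ψ_I⁻¹(Q_I)`. -/
def InV (K : OrbAtlas Y A Γ) (Q : Finset A → Set Y) (x : K.Obj) : Prop :=
  K.psiObj x ∈ Q x.1.1

/-- The object space `⊔_I V_I` of the reduced groupoid `V_K`. -/
abbrev VObj (K : OrbAtlas Y A Γ) (Q : Finset A → Set Y) : Type _ :=
  { x : K.Obj // K.InV Q x }

/-- An object of `V_K` from a point of `V_J = ψ_J⁻¹(Q_J)`. -/
def mkV (K : OrbAtlas Y A Γ) (Q : Finset A → Set Y) (J : Finset A) (hJ : K.mem J)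
    (x : K.W J) (hx : K.psi J x ∈ Q J) : K.VObj Q :=
  ⟨⟨⟨J, hJ⟩, x⟩, hx⟩

/-- The morphisms of `V_K` from `V_I` to `V_J` for `I ⊆ J`: the union over nonempty
`K' ⊆ I` of `(Ṽ_{K'J} ∩ Ṽ_{IJ}) × Γ_{I∖K'}`, viewed inside
`Mor_{G_K}(W_I, W_J) = W_{I∪J} × Γ_{I∩J}`. -/
def VCondUp (K : OrbAtlas Y A Γ) (Q : Finset A → Set Y) (m : K.GMor) : Prop :=
  m.1.1.1 ⊆ m.1.1.2 ∧
  K.psi (m.1.1.1 ∪ m.1.1.2) m.2.1 ∈ Q m.1.1.2 ∧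
  ∃ K' : Finset A, K'.Nonempty ∧ K' ⊆ m.1.1.1 ∧
    K.psi (m.1.1.1 ∪ m.1.1.2) m.2.1 ∈ Q K' ∧
    K.psi (m.1.1.1 ∪ m.1.1.2) m.2.1 ∈ Q m.1.1.1 ∧
    (∀ (i : A) (hi : i ∈ m.1.1.1 ∩ m.1.1.2), i ∈ K' → m.2.2 ⟨i, hi⟩ = 1)

/-- The set of morphisms of the reduced groupoid `V_K ⊆ G_K`: for `I ⊆ J` the
morphisms `⋃_{∅ ≠ K' ⊆ I} (Ṽ_{K'J} ∩ Ṽ_{IJ}) × Γ_{I∖K'}`, for `I ⊇ J` the inverses of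
these, and no others. -/
def MorV (K : OrbAtlas Y A Γ) (Q : Finset A → Set Y) : Set K.GMor :=
  {m | K.VCondUp Q m ∨ ∃ μ : K.GMor, K.VCondUp Q μ ∧ m = K.ginv μ}

/-- `m` is an identity morphism of `G_K` at `x`. -/
def IsIdG (K : OrbAtlas Y A Γ) (m : K.GMor) (x : K.Obj) : Prop :=
  K.gsrc m = x ∧ K.gtgt m = x ∧ m.1.1.1 = m.1.1.2 ∧ m.2.2 = 1

end OrbAtlas

/-! A morphism `(z, γ) : W_I → W_J` of `G_K` lies in `V_K` exactly when `I` and `J` are nested,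
its footprint `ψ_{I∪J}(z)` lies in `Q_I ∩ Q_J ∩ Q_{K'}` for some nonempty `K' ⊆ I ∩ J`, and `γ`
is trivial on `K'`. This description is symmetric in `I` and `J`, hence stable under inversion.
Since `Q_I` and `Q_J` meet only when `I` and `J` are nested, the sets `K'` of two composable
morphisms are nested, and the smaller one serves for the composite. Two morphisms with
the same source and target differ by an element of `Γ_I` that fixes a point and is trivial at
an index `i₀` common to their sets `K'`, so it is trivial because `Γ_{I∖{i₀}}` acts freely. -/

section PiGamma

variable {A : Type} {Γ : A → Type}

instance PiGamma.discreteTopology (I : Finset A) : DiscreteTopology (PiGamma Γ I) := ⟨rfl⟩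

theorem PiGamma.cast_apply {I J : Finset A} (h : I = J) (γ : PiGamma Γ I) {i : A}
    (hiJ : i ∈ J) (hiI : i ∈ I) : cast (congrArg (PiGamma Γ) h) γ ⟨i, hiJ⟩ = γ ⟨i, hiI⟩ := by
  subst h; rfl

theorem PiGamma.cast_inv [∀ i, Group (Γ i)] {I J : Finset A} (h : I = J) (γ : PiGamma Γ I) :
    cast (congrArg (PiGamma Γ) h) γ⁻¹ = (cast (congrArg (PiGamma Γ) h) γ)⁻¹ := by
  subst h; rfl

variable [DecidableEq A] [∀ i, Group (Γ i)]

theorem gext_apply_of_mem {I J : Finset A} (h : I ⊆ J) (γ : PiGamma Γ I) {j : A}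
    (hjJ : j ∈ J) (hjI : j ∈ I) : gext h γ ⟨j, hjJ⟩ = γ ⟨j, hjI⟩ :=
  dif_pos hjI

theorem gext_apply_of_notMem {I J : Finset A} (h : I ⊆ J) (γ : PiGamma Γ I) {j : A}
    (hjJ : j ∈ J) (hjI : j ∉ I) : gext h γ ⟨j, hjJ⟩ = 1 :=
  dif_neg hjI

theorem gext_inv {I J : Finset A} (h : I ⊆ J) (γ : PiGamma Γ I) :
    gext h γ⁻¹ = (gext h γ)⁻¹ := by
  funext ⟨j, hj⟩
  by_cases hjI : j ∈ I
  · simp only [gext_apply_of_mem h _ hj hjI, Pi.inv_apply]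
  · simp only [gext_apply_of_notMem h _ hj hjI, Pi.inv_apply, inv_one]

theorem gext_cast {I I' J J' : Finset A} (hI : I = I') (hJ : J = J') (h : I ⊆ J) (h' : I' ⊆ J')
    (γ : PiGamma Γ I) :
    gext h' (cast (congrArg (PiGamma Γ) hI) γ) = cast (congrArg (PiGamma Γ) hJ) (gext h γ) := by
  subst hI hJ; rfl

end PiGamma

theorem exists_nonempty_subset_inter_mem {A Y : Type*} [DecidableEq A]
    {Q : Finset A → Set Y} (hQ : ∀ I J, (Q I ∩ Q J).Nonempty → I ⊆ J ∨ J ⊆ I)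
    {K₁ K₂ : Finset A} (hK₁ : K₁.Nonempty) (hK₂ : K₂.Nonempty) {y : Y} (h₁ : y ∈ Q K₁)
    (h₂ : y ∈ Q K₂) : ∃ K', K'.Nonempty ∧ K' ⊆ K₁ ∩ K₂ ∧ y ∈ Q K' := by
  rcases hQ K₁ K₂ ⟨y, h₁, h₂⟩ with h | h
  · exact ⟨K₁, hK₁, Finset.subset_inter subset_rfl h, h₁⟩
  · exact ⟨K₂, hK₂, Finset.subset_inter h subset_rfl, h₂⟩

namespace OrbAtlas

variable {Y : Type*} [TopologicalSpace Y] {A : Type} [DecidableEq A]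
  {Γ : A → Type} [∀ i, Group (Γ i)] [∀ i, Finite (Γ i)] (K : OrbAtlas Y A Γ)

theorem psi_cast {I J : Finset A} (h : I = J) (x : K.W I) :
    K.psi J (cast (congrArg K.W h) x) = K.psi I x := by
  subst h; rfl

theorem cast_smul {I J : Finset A} (h : I = J) (γ : PiGamma Γ I) (x : K.W I) :
    cast (congrArg K.W h) (γ • x) = cast (congrArg (PiGamma Γ) h) γ • cast (congrArg K.W h) x := by
  subst h; rfl

def psiMor (m : K.GMor) : Y := K.psi (m.1.1.1 ∪ m.1.1.2) m.2.1

theorem psiObj_gsrc (m : K.GMor) : K.psiObj (K.gsrc m) = K.psiMor m :=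
  (K.psi_smul _ _ _).trans (K.psi_rho _ _ Finset.subset_union_left m.1.2.1.1 _)

theorem psiObj_gtgt (m : K.GMor) : K.psiObj (K.gtgt m) = K.psiMor m :=
  K.psi_rho _ _ Finset.subset_union_right m.1.2.2.1.1 _

theorem psiMor_ginv (m : K.GMor) : K.psiMor (K.ginv m) = K.psiMor m :=
  (K.psi_cast (Finset.union_comm _ _) _).trans (K.psi_smul _ _ _)

theorem ginv_ginv (m : K.GMor) : K.ginv (K.ginv m) = m := by
  obtain ⟨⟨⟨I, J⟩, hm⟩, z, γ⟩ := m
  refine congrArg (fun q => (⟨⟨(I, J), hm⟩, q⟩ : K.GMor)) (Prod.ext ?_ ?_)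
  · show cast (congrArg K.W (Finset.union_comm J I))
        ((gext Finset.inter_subset_union
            (cast (congrArg (PiGamma Γ) (Finset.inter_comm I J)) γ⁻¹))⁻¹ •
          cast (congrArg K.W (Finset.union_comm I J))
            ((gext Finset.inter_subset_union γ)⁻¹ • z)) = z
    rw [gext_cast (Finset.inter_comm I J) (Finset.union_comm I J) Finset.inter_subset_union,
      ← PiGamma.cast_inv, ← cast_smul, gext_inv, inv_inv, smul_inv_smul, cast_cast, cast_eq]
    all_goals exact Finset.union_comm _ _
  · show cast (congrArg (PiGamma Γ) (Finset.inter_comm J I))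
        (cast (congrArg (PiGamma Γ) (Finset.inter_comm I J)) γ⁻¹)⁻¹ = γ
    rw [PiGamma.cast_inv, cast_cast, cast_eq, inv_inv]
    exact Finset.inter_comm _ _

def VCond (Q : Finset A → Set Y) (m : K.GMor) : Prop :=
  (m.1.1.1 ⊆ m.1.1.2 ∨ m.1.1.2 ⊆ m.1.1.1) ∧ K.psiMor m ∈ Q m.1.1.1 ∧ K.psiMor m ∈ Q m.1.1.2 ∧
    ∃ K' : Finset A, K'.Nonempty ∧ K' ⊆ m.1.1.1 ∩ m.1.1.2 ∧ K.psiMor m ∈ Q K' ∧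
      ∀ (i : A) (hi : i ∈ m.1.1.1 ∩ m.1.1.2), i ∈ K' → m.2.2 ⟨i, hi⟩ = 1

variable {K} {Q : Finset A → Set Y}

theorem VCond.ginv {m : K.GMor} (h : K.VCond Q m) : K.VCond Q (K.ginv m) := by
  rw [VCond, psiMor_ginv]
  obtain ⟨⟨⟨I, J⟩, hm⟩, z, γ⟩ := m
  obtain ⟨hIJ, hI, hJ, K', hK', hK'IJ, hK'Q, hγ⟩ := h
  refine ⟨hIJ.symm, hJ, hI, K', hK', Finset.inter_comm I J ▸ hK'IJ, hK'Q, fun i hi hiK' => ?_⟩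
  have hi' : i ∈ I ∩ J := Finset.inter_comm I J ▸ hi
  exact (PiGamma.cast_apply (Finset.inter_comm I J) γ⁻¹ (hi : i ∈ J ∩ I) hi').trans
    (inv_eq_one.2 (hγ i hi' hiK'))

theorem VCondUp.vCond {m : K.GMor} (h : K.VCondUp Q m) : K.VCond Q m := by
  obtain ⟨hIJ, hJ, K', hK', hK'I, hK'Q, hI, hγ⟩ := h
  exact ⟨Or.inl hIJ, hI, hJ, K', hK', Finset.subset_inter hK'I (hK'I.trans hIJ), hK'Q, hγ⟩

theorem mem_morV_iff {m : K.GMor} : m ∈ K.MorV Q ↔ K.VCond Q m := by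
  refine ⟨?_, fun h => ?_⟩
  · rintro (h | ⟨μ, hμ, rfl⟩)
    exacts [h.vCond, hμ.vCond.ginv]
  · have up : ∀ {m : K.GMor}, K.VCond Q m → m.1.1.1 ⊆ m.1.1.2 → K.VCondUp Q m :=
      fun ⟨_, hI, hJ, K', hK', hK'IJ, hK'Q, hγ⟩ hIJ =>
        ⟨hIJ, hJ, K', hK', hK'IJ.trans Finset.inter_subset_left, hK'Q, hI, hγ⟩
    rcases h.1 with hIJ | hJI
    · exact Or.inl (up h hIJ)
    · exact Or.inr ⟨K.ginv m, up h.ginv hJI, (K.ginv_ginv m).symm⟩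

theorem ginv_mem_morV {f : K.GMor} (hf : f ∈ K.MorV Q) : K.ginv f ∈ K.MorV Q :=
  mem_morV_iff.2 (mem_morV_iff.1 hf).ginv

theorem inV_gsrc_of_mem_morV {f : K.GMor} (hf : f ∈ K.MorV Q) : K.InV Q (K.gsrc f) :=
  show K.psiObj (K.gsrc f) ∈ Q f.1.1.1 from K.psiObj_gsrc f ▸ (mem_morV_iff.1 hf).2.1

theorem inV_gtgt_of_mem_morV {f : K.GMor} (hf : f ∈ K.MorV Q) : K.InV Q (K.gtgt f) :=
  show K.psiObj (K.gtgt f) ∈ Q f.1.1.2 from K.psiObj_gtgt f ▸ (mem_morV_iff.1 hf).2.2.1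

theorem mem_morV_of_isIdG {x : K.Obj} {m : K.GMor} (hx : K.InV Q x) (hm : K.IsIdG m x) :
    m ∈ K.MorV Q := by
  obtain ⟨-, rfl, hIJ, hγ⟩ := hm
  have hψ : K.psiMor m ∈ Q m.1.1.2 := K.psiObj_gtgt m ▸ hx
  obtain ⟨⟨⟨I, J⟩, hm⟩, z, γ⟩ := m
  obtain rfl : I = J := hIJ
  exact mem_morV_iff.2 ⟨Or.inl subset_rfl, hψ, hψ, I, hm.1.1, Finset.subset_inter subset_rfl
    subset_rfl, hψ, fun i hi _ => congrFun hγ ⟨i, hi⟩⟩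

theorem IsCompositeG.psiMor_eq {f g c : K.GMor} (h : K.IsCompositeG f g c) :
    K.psiMor c = K.psiMor f ∧ K.psiMor c = K.psiMor g := by
  obtain ⟨I, J, L, -, -, -, hIJ, hJL, hIL, z, γ, w, δ, v, α, rfl, rfl, hv₁, hv₂, rfl⟩ := h
  have hv : K.psi (I ∪ L) (K.rho (I ∪ L) (I ∪ J ∪ L) v) = K.psi (I ∪ J ∪ L) v :=
    K.psi_rho _ _ (Finset.union_subset_union Finset.subset_union_left subset_rfl) hIL.1 v
  have hvz := congrArg (K.psi (I ∪ J)) hv₁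
  have hvw := congrArg (K.psi (J ∪ L)) hv₂
  rw [K.psi_rho _ _ Finset.subset_union_left hIJ.1, K.psi_smul, K.psi_smul, K.psi_smul] at hvz
  rw [K.psi_rho _ _ (Finset.union_subset_union Finset.subset_union_right subset_rfl) hJL.1,
    K.psi_smul] at hvw
  exact ⟨hv.trans hvz, hv.trans hvw⟩

theorem mem_morV_of_isCompositeG (hQ : ∀ I J, (Q I ∩ Q J).Nonempty → I ⊆ J ∨ J ⊆ I)
    {f g c : K.GMor} (hf : f ∈ K.MorV Q) (hg : g ∈ K.MorV Q) (hc : K.IsCompositeG f g c) :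
    c ∈ K.MorV Q := by
  obtain ⟨hcf, hcg⟩ := hc.psiMor_eq
  rw [mem_morV_iff] at hf hg ⊢
  obtain ⟨I, J, L, _, _, _, _, _, _, z, γ, w, δ, v, α, rfl, rfl, -, -, rfl⟩ := hc
  obtain ⟨-, hcI, -, K₁, hK₁, hK₁IJ, hcK₁, hγ⟩ := hf
  obtain ⟨-, -, hcL, K₂, hK₂, hK₂JL, hcK₂, hδ⟩ := hg
  rw [← hcf] at hcI hcK₁
  rw [← hcg] at hcL hcK₂
  obtain ⟨K', hK', hK'K, hcK'⟩ := exists_nonempty_subset_inter_mem hQ hK₁ hK₂ hcK₁ hcK₂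
  have hK'IJL : ∀ {i}, i ∈ K' → i ∈ K₁ ∧ i ∈ K₂ ∧ i ∈ I ∩ J ∧ i ∈ J ∩ L := fun hi =>
    have h := Finset.mem_inter.1 (hK'K hi)
    ⟨h.1, h.2, hK₁IJ h.1, hK₂JL h.2⟩
  refine ⟨hQ I L ⟨_, hcI, hcL⟩, hcI, hcL, K', hK', fun i hi => ?_, hcK', fun i hi hiK' => ?_⟩
  · obtain ⟨-, -, hiIJ, hiJL⟩ := hK'IJL hi
    exact Finset.mem_inter.2 ⟨(Finset.mem_inter.1 hiIJ).1, (Finset.mem_inter.1 hiJL).2⟩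
  -- `α` lives on `(I ∩ L) ∖ J`, so at `i ∈ J` the composite only sees `δ_i γ_i = 1`.
  obtain ⟨hiK₁, hiK₂, hiIJ, hiJL⟩ := hK'IJL hiK'
  have hiJ : i ∉ (I ∩ L) \ J := fun h => (Finset.mem_sdiff.1 h).2 (Finset.mem_inter.1 hiIJ).2
  have hiIJL : i ∈ I ∩ J ∩ L :=
    Finset.mem_inter.2 ⟨hiIJ, (Finset.mem_inter.1 hiJL).2⟩
  replace hi : i ∈ I ∩ L := hi
  show gext _ α ⟨i, hi⟩ * gext _ (gres _ δ) ⟨i, hi⟩ * gext _ (gres _ γ) ⟨i, hi⟩ = 1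
  rw [gext_apply_of_notMem _ _ _ hiJ, gext_apply_of_mem _ _ _ hiIJL,
    gext_apply_of_mem _ _ _ hiIJL]
  have hδi : δ ⟨i, hiJL⟩ = 1 := hδ i hiJL hiK₂
  have hγi : γ ⟨i, hiIJ⟩ = 1 := hγ i hiIJ hiK₁
  simp only [gres, hδi, hγi, mul_one]

theorem eq_one_of_smul_eq_self {I : Finset A} {i₀ : A} (hi₀ : i₀ ∈ I) {θ : PiGamma Γ I}
    {x : K.W I} (hθ : θ ⟨i₀, hi₀⟩ = 1) (hx : θ • x = x) : θ = 1 := by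
  rcases Nat.lt_or_ge 1 I.card with hcard | hcard
  · exact K.free I i₀ hi₀ hcard θ x hθ hx
  · funext ⟨i, hi⟩
    obtain rfl := Finset.card_le_one.1 hcard i hi i₀ hi₀
    exact hθ

theorem mkG_eq_of_gsrc_eq_of_gtgt_eq {I J : Finset A} {hI : K.mem I} {hJ : K.mem J}
    {hU : K.mem (I ∪ J)} {z w : K.W (I ∪ J)} {γ δ : PiGamma Γ (I ∩ J)}
    (hsrc : K.gsrc (K.mkG I J hI hJ hU z γ) = K.gsrc (K.mkG I J hI hJ hU w δ))
    (htgt : K.gtgt (K.mkG I J hI hJ hU z γ) = K.gtgt (K.mkG I J hI hJ hU w δ))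
    {i₀ : A} (hi₀ : i₀ ∈ I ∩ J) (hγδ : γ ⟨i₀, hi₀⟩ = δ ⟨i₀, hi₀⟩) :
    z = w ∧ γ = δ := by
  replace hsrc : (gext Finset.inter_subset_left γ)⁻¹ • K.rho I (I ∪ J) z =
      (gext Finset.inter_subset_left δ)⁻¹ • K.rho I (I ∪ J) w :=
    eq_of_heq (Sigma.mk.inj_iff.1 hsrc).2
  replace htgt : K.rho J (I ∪ J) z = K.rho J (I ∪ J) w := eq_of_heq (Sigma.mk.inj_iff.1 htgt).2
  obtain ⟨hi₀I, hi₀J⟩ := Finset.mem_inter.1 hi₀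
  obtain ⟨β, hβJ, rfl⟩ :=
    (K.rho_fib J (I ∪ J) Finset.subset_union_right ⟨i₀, hi₀J⟩ z w).1 htgt
  set θ : PiGamma Γ I := gext Finset.inter_subset_left γ *
    ((gext Finset.inter_subset_left δ)⁻¹ * gres Finset.subset_union_left β)
  have hθ : θ = 1 := by
    refine K.eq_one_of_smul_eq_self hi₀I (x := K.rho I (I ∪ J) z) ?_ ?_
    · show gext _ γ ⟨i₀, hi₀I⟩ * ((gext _ δ ⟨i₀, hi₀I⟩)⁻¹ * β ⟨i₀, _⟩) = 1
      rw [gext_apply_of_mem _ _ _ hi₀, gext_apply_of_mem _ _ _ hi₀, hβJ i₀ hi₀J, hγδ,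
        mul_one, mul_inv_cancel]
    · rw [K.rho_equiv I (I ∪ J) Finset.subset_union_left ⟨i₀, hi₀I⟩, ← mul_smul] at hsrc
      rw [mul_smul, ← hsrc, smul_inv_smul]
  have hθi : ∀ i (hi : i ∈ I), gext Finset.inter_subset_left γ ⟨i, hi⟩ *
      ((gext Finset.inter_subset_left δ ⟨i, hi⟩)⁻¹ * β ⟨i, Finset.subset_union_left hi⟩) = 1 :=
    fun i hi => congrFun hθ ⟨i, hi⟩
  have hβ : β = 1 := by
    funext ⟨i, hi⟩
    show β ⟨i, hi⟩ = 1
    by_cases hiJ : i ∈ J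
    · exact hβJ i hiJ
    · have hiI := (Finset.mem_union.1 hi).resolve_right hiJ
      have hiIJ : i ∉ I ∩ J := fun h => hiJ (Finset.mem_inter.1 h).2
      simpa only [gext_apply_of_notMem _ _ _ hiIJ, inv_one, one_mul] using hθi i hiI
  refine ⟨by rw [hβ, one_smul], funext fun ⟨i, hi⟩ => ?_⟩
  have := hθi i (Finset.mem_inter.1 hi).1
  rwa [gext_apply_of_mem _ _ _ hi, gext_apply_of_mem _ _ _ hi, hβ, Pi.one_apply, mul_one,
    mul_inv_eq_one] at this

theorem eq_of_mem_morV (hQ : ∀ I J, (Q I ∩ Q J).Nonempty → I ⊆ J ∨ J ⊆ I)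
    {f g : K.GMor} (hf : f ∈ K.MorV Q) (hg : g ∈ K.MorV Q)
    (hsrc : K.gsrc f = K.gsrc g) (htgt : K.gtgt f = K.gtgt g) : f = g := by
  have hψ : K.psiMor g = K.psiMor f := by rw [← psiObj_gtgt, ← htgt, psiObj_gtgt]
  rw [mem_morV_iff] at hf hg
  obtain ⟨⟨⟨I, J⟩, hI, hJ, hU⟩, z, γ⟩ := f
  obtain ⟨⟨⟨I', J'⟩, _⟩, w, δ⟩ := g
  obtain rfl : I = I' := congrArg (fun x : K.Obj => x.1.1) hsrc
  obtain rfl : J = J' := congrArg (fun x : K.Obj => x.1.1) htgt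
  obtain ⟨-, -, -, K₁, hK₁, hK₁IJ, hzK₁, hγ⟩ := hf
  obtain ⟨-, -, -, K₂, hK₂, hK₂IJ, hwK₂, hδ⟩ := hg
  obtain ⟨K', ⟨i₀, hi₀⟩, hK'K, -⟩ :=
    exists_nonempty_subset_inter_mem hQ hK₁ hK₂ hzK₁ (hψ ▸ hwK₂)
  obtain ⟨hi₀₁, hi₀₂⟩ := Finset.mem_inter.1 (hK'K hi₀)
  have hi₀IJ : i₀ ∈ I ∩ J := hK₁IJ hi₀₁
  obtain ⟨rfl, rfl⟩ := mkG_eq_of_gsrc_eq_of_gtgt_eq (hI := hI) (hJ := hJ) (hU := hU) hsrc htgt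
    hi₀IJ ((hγ i₀ hi₀IJ hi₀₁).trans (hδ i₀ hi₀IJ hi₀₂).symm)
  rfl

theorem isOpen_morV (hQ : ∀ I, IsOpen (Q I)) : IsOpen (K.MorV Q) := by
  rw [show K.MorV Q = {m | K.VCond Q m} from Set.ext fun _ => mem_morV_iff, isOpen_sigma_iff]
  intro p
  have hψ : ∀ U, IsOpen U → IsOpen {x : K.W (p.1.1 ∪ p.1.2) × PiGamma Γ (p.1.1 ∩ p.1.2) |
      K.psi _ x.1 ∈ U} :=
    fun U hU => hU.preimage ((K.psi_cont _).comp continuous_fst)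
  simp only [VCond, psiMor, preimage_ofPred_eq]
  refine isOpen_const.and ((hψ _ (hQ _)).and ((hψ _ (hQ _)).and ?_))
  simp only [ofPred_exists]
  exact isOpen_iUnion fun K' => isOpen_const.and (isOpen_const.and ((hψ _ (hQ _)).and
    ((isOpen_discrete {γ : PiGamma Γ (p.1.1 ∩ p.1.2) |
      ∀ i (hi : i ∈ p.1.1 ∩ p.1.2), i ∈ K' → γ ⟨i, hi⟩ = 1}).preimage continuous_snd)))

theorem reduced_groupoid_wellDefined_general
    (K : OrbAtlas Y A Γ)
    (Q : Finset A → Set Y)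
    (hQopen : ∀ I, IsOpen (Q I))
    (hQsep : ∀ I J : Finset A, (closure (Q I) ∩ closure (Q J)).Nonempty →
      I ⊆ J ∨ J ⊆ I) :
    -- V_K contains the identity morphisms at its objects
    (∀ (x : K.Obj), K.InV Q x → ∀ m : K.GMor, K.IsIdG m x → m ∈ K.MorV Q) ∧
    -- V_K is closed under composition in G_K
    (∀ f g c : K.GMor, f ∈ K.MorV Q → g ∈ K.MorV Q →
      K.IsCompositeG f g c → c ∈ K.MorV Q) ∧
    -- V_K is closed under taking inverses
    (∀ f : K.GMor, f ∈ K.MorV Q → K.ginv f ∈ K.MorV Q) ∧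
    -- sources and targets of V_K-morphisms are objects of V_K
    (∀ f : K.GMor, f ∈ K.MorV Q → K.InV Q (K.gsrc f) ∧ K.InV Q (K.gtgt f)) ∧
    -- V_K is nonsingular: at most one morphism between any two objects
    (∀ f g : K.GMor, f ∈ K.MorV Q → g ∈ K.MorV Q →
      K.gsrc f = K.gsrc g → K.gtgt f = K.gtgt g → f = g) ∧
    -- V_K is étale: its morphism set is open in Mor_{G_K}
    IsOpen (K.MorV Q) := by
  have hQ : ∀ I J, (Q I ∩ Q J).Nonempty → I ⊆ J ∨ J ⊆ I := fun I J ⟨y, hyI, hyJ⟩ =>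
    hQsep I J ⟨y, subset_closure hyI, subset_closure hyJ⟩
  exact ⟨fun _ hx _ hm => mem_morV_of_isIdG hx hm,
    fun _ _ _ hf hg hc => mem_morV_of_isCompositeG hQ hf hg hc,
    fun _ hf => ginv_mem_morV hf,
    fun _ hf => ⟨inV_gsrc_of_mem_morV hf, inV_gtgt_of_mem_morV hf⟩,
    fun _ _ hf hg hsrc htgt => eq_of_mem_morV hQ hf hg hsrc htgt,
    isOpen_morV hQopen⟩

/-- Let `K` be a strict orbifold atlas on a compact orbifold `Y` and `V = (V_I)` the
reduction of `K` associated to a cover reduction `(Q_I)` of the footprint cover.  Then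
the groupoid `V_K` is well defined: its set of morphisms contains all identity
morphisms at objects of `V_K`, is closed under composition in `G_K`, and is closed
under taking inverses; in particular `V_K` is a nonsingular étale groupoid (it has at
most one morphism between any two objects, and its morphism set is open in that of
`G_K`). -/
theorem reduced_groupoid_wellDefined
    [T2Space Y] [CompactSpace Y] (K : OrbAtlas Y A Γ)
    (Q : Finset A → Set Y)
    (hQopen : ∀ I, IsOpen (Q I))
    (hQempty : Q ∅ = ∅)
    (hQprecpt : ∀ I : Finset A, I.Nonempty → closure (Q I) ⊆ K.FI I)
    (hQcover : (⋃ I : Finset A, Q I) = Set.univ)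
    (hQsep : ∀ I J : Finset A, (closure (Q I) ∩ closure (Q J)).Nonempty →
      I ⊆ J ∨ J ⊆ I) :
    -- V_K contains the identity morphisms at its objects
    (∀ (x : K.Obj), K.InV Q x → ∀ m : K.GMor, K.IsIdG m x → m ∈ K.MorV Q) ∧
    -- V_K is closed under composition in G_K
    (∀ f g c : K.GMor, f ∈ K.MorV Q → g ∈ K.MorV Q →
      K.IsCompositeG f g c → c ∈ K.MorV Q) ∧
    -- V_K is closed under taking inverses
    (∀ f : K.GMor, f ∈ K.MorV Q → K.ginv f ∈ K.MorV Q) ∧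
    -- sources and targets of V_K-morphisms are objects of V_K
    (∀ f : K.GMor, f ∈ K.MorV Q → K.InV Q (K.gsrc f) ∧ K.InV Q (K.gtgt f)) ∧
    -- V_K is nonsingular: at most one morphism between any two objects
    (∀ f g : K.GMor, f ∈ K.MorV Q → g ∈ K.MorV Q →
      K.gsrc f = K.gsrc g → K.gtgt f = K.gtgt g → f = g) ∧
    -- V_K is étale: its morphism set is open in Mor_{G_K}
    IsOpen (K.MorV Q) :=
  reduced_groupoid_wellDefined_general K Q hQopen hQsep

end OrbAtlas
end

section
/- Let K be a set with |K| = 4. For each nonempty I ⊆ K let W_I := (ℤ/2)^I / Δ_I, the set of cosets of the diagonal subgroup Δ_I ≤ (ℤ/2)^I, and for I ⊆ J let ρ_{IJ} : W_J → W_I be the map induced by coordinate restriction (ℤ/2)^J → (ℤ/2)^I. Suppose given, for each 2-element subset I ⊆ K, an element W_I^0 ∈ W_I. For each 3-element subset J ⊆ K define α_J ∈ ℤ/2 by α_J := 0 if there exists w ∈ W_J with ρ_{IJ}(w) = W_I^0 for every 2-element I ⊆ J, and α_J := 1 otherwise. Then Σ_{j ∈ K} α_{K∖{j}} = 0 in ℤ/2;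 that is, an even number of the four elements α_{K∖{j}} vanish, so (α_J) satisfies the Čech cocycle condition. -/
private lemma z2_self (x : ZMod 2) : x + x = 0 := by revert x; decide

private lemma z2_sum (x y c : ZMod 2) : (x + c) + (y + c) = x + y := by
  revert x y c; decide

private lemma z2_split (a b x y : ZMod 2) (h : a + b = x + y) :
    a = x + (a + x) ∧ b = y + (a + x) := by revert a b x y; decide

private lemma z2_tri (x y z : ZMod 2) : (x + y) + ((x + z) + (y + z)) = 0 := by
  revert x y z; decide

private lemma z2_tri' (x y z : ZMod 2) (h : x + (y + z) = 0) : x + y = z := by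
  revert x y z; decide

private lemma z2_iff (x y : ZMod 2) (h : x = 0 ↔ y = 0) : x = y := by
  revert x y; decide

private lemma aux_pair {K : Type*} [DecidableEq K] (w v : K → ZMod 2)
    (I : Finset K) (hI : I.card = 2) :
    (∃ c : ZMod 2, ∀ i ∈ I, w i = v i + c) ↔ ∑ i ∈ I, w i = ∑ i ∈ I, v i := by
  obtain ⟨x, y, hxy, rfl⟩ := Finset.card_eq_two.mp hI
  rw [Finset.sum_pair hxy, Finset.sum_pair hxy]
  constructor
  · rintro ⟨c, hc⟩
    rw [hc x (by simp), hc y (by simp)]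
    exact z2_sum _ _ _
  · intro h
    refine ⟨w x + v x, fun i hi => ?_⟩
    rcases Finset.mem_insert.mp hi with rfl | hi
    · exact (z2_split _ _ _ _ h).1
    · rw [Finset.mem_singleton.mp hi]
      exact (z2_split _ _ _ _ h).2

private lemma aux_pairs_of_triple {K : Type*} [DecidableEq K] {a b c : K}
    {I : Finset K} (hIJ : I ⊆ {a, b, c}) (hI : I.card = 2) :
    I = {a, b} ∨ I = {a, c} ∨ I = {b, c} := by
  obtain ⟨x, y, hxy, rfl⟩ := Finset.card_eq_two.mp hI
  have hx : x ∈ ({a, b, c} : Finset K) := hIJ (by simp)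
  have hy : y ∈ ({a, b, c} : Finset K) := hIJ (by simp)
  simp only [Finset.mem_insert, Finset.mem_singleton] at hx hy
  rcases hx with rfl | rfl | rfl <;> rcases hy with rfl | rfl | rfl <;>
    simp_all [Finset.pair_comm]

private lemma powersetCard_triple {K : Type*} [DecidableEq K] {a b c : K}
    (hab : a ≠ b) (hac : a ≠ c) (hbc : b ≠ c) :
    ({a, b, c} : Finset K).powersetCard 2 = {{a, b}, {a, c}, {b, c}} := by
  ext I
  simp only [Finset.mem_powersetCard, Finset.mem_insert, Finset.mem_singleton]
  constructor
  · rintro ⟨hIJ, hI⟩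
    exact aux_pairs_of_triple hIJ hI
  · rintro (rfl | rfl | rfl) <;>
      refine ⟨?_, Finset.card_pair (by assumption)⟩ <;>
      intro z hz <;> simp only [Finset.mem_insert, Finset.mem_singleton] at hz ⊢ <;> tauto



/-- Let `K` be a set with `|K| = 4`.  For each nonempty `I ⊆ K` let `W_I := (ℤ/2)^I / Δ_I`
(functions `I → ℤ/2` modulo adding a constant), and for `I ⊆ J` let `ρ_{IJ} : W_J → W_I`
be induced by coordinate restriction.  Elements of `W_I` are represented here by functions
`K → ℤ/2` considered up to adding a constant on `I`; thus the data of an element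
`W_I^0 ∈ W_I` for each 2-element subset `I` is given by a representative `w0 I : K → ℤ/2`.
For each 3-element subset `J ⊆ K` define `α J ∈ ℤ/2` by: `α J = 0` iff there exists
`w ∈ W_J` (a representative `w : K → ℤ/2` considered up to a constant on `J`) with
`ρ_{IJ} w = W_I^0` for every 2-element `I ⊆ J`, i.e. `w` agrees with `w0 I` on `I` up to
a constant, and `α J = 1` otherwise.  Then `Σ_{j ∈ K} α (K ∖ {j}) = 0` in `ℤ/2`; that is,
an even number of the four elements `α (K ∖ {j})` vanish, so `(α J)` satisfies the Čech
cocycle condition. -/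
theorem cech_cocycle_condition
    {K : Type*} [Fintype K] [DecidableEq K] (hK : Fintype.card K = 4)
    (w0 : Finset K → (K → ZMod 2))
    (α : Finset K → ZMod 2)
    (hα : ∀ J : Finset K, J.card = 3 →
      (α J = 0 ↔ ∃ w : K → ZMod 2, ∀ I : Finset K, I ⊆ J → I.card = 2 →
        ∃ c : ZMod 2, ∀ i ∈ I, w i = w0 I i + c)) :
    ∑ j : K, α (Finset.univ.erase j) = 0 := by
  set S : Finset K → ZMod 2 := fun I => ∑ i ∈ I, w0 I i with hS
  -- key: α J equals the sum of S over 2-element subsets of J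
  have key : ∀ J : Finset K, J.card = 3 → α J = ∑ I ∈ J.powersetCard 2, S I := by
    intro J hJ
    obtain ⟨a, b, c, hab, hac, hbc, rfl⟩ := Finset.card_eq_three.mp hJ
    have hABC : ({a, b} : Finset K) ≠ {a, c} := by
      intro h
      have : c ∈ ({a, b} : Finset K) := h ▸ (by simp : c ∈ ({a, c} : Finset K))
      simp only [Finset.mem_insert, Finset.mem_singleton] at this
      tauto
    have hABbc : ({a, b} : Finset K) ≠ {b, c} := by
      intro h
      have : c ∈ ({a, b} : Finset K) := h ▸ (by simp : c ∈ ({b, c} : Finset K))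
      simp only [Finset.mem_insert, Finset.mem_singleton] at this
      tauto
    have hACbc : ({a, c} : Finset K) ≠ {b, c} := by
      intro h
      have : b ∈ ({a, c} : Finset K) := h ▸ (by simp : b ∈ ({b, c} : Finset K))
      simp only [Finset.mem_insert, Finset.mem_singleton] at this
      tauto
    rw [powersetCard_triple hab hac hbc]
    have hsum3 : ∑ I ∈ ({({a,b} : Finset K), {a,c}, {b,c}} : Finset (Finset K)), S I
        = S {a, b} + (S {a, c} + S {b, c}) := by
      rw [Finset.sum_insert (by simp [hABC, hABbc]),
        Finset.sum_insert (by simp [hACbc]), Finset.sum_singleton]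
    rw [hsum3]
    have hiff2 : α ({a, b, c} : Finset K) = 0 ↔
        S {a, b} + (S {a, c} + S {b, c}) = 0 := by
      rw [hα {a, b, c} hJ]
      constructor
      · rintro ⟨w, hw⟩
        have h1 := hw {a, b} (by intro z hz; simp at hz ⊢; tauto) (Finset.card_pair hab)
        have h2 := hw {a, c} (by intro z hz; simp at hz ⊢; tauto) (Finset.card_pair hac)
        have h3 := hw {b, c} (by intro z hz; simp at hz ⊢; tauto) (Finset.card_pair hbc)
        rw [aux_pair _ _ _ (Finset.card_pair hab), Finset.sum_pair hab] at h1
        rw [aux_pair _ _ _ (Finset.card_pair hac), Finset.sum_pair hac] at h2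
        rw [aux_pair _ _ _ (Finset.card_pair hbc), Finset.sum_pair hbc] at h3
        simp only [hS]
        rw [← h1, ← h2, ← h3]
        exact z2_tri _ _ _
      · intro h
        refine ⟨fun k => if k = b then S {a, b} else if k = c then S {a, c} else 0,
          fun I hIJ hI => ?_⟩
        rw [aux_pair _ _ _ hI]
        rcases aux_pairs_of_triple hIJ hI with rfl | rfl | rfl
        · rw [Finset.sum_pair hab, if_neg hab, if_neg hac,
            if_pos (show b = b from rfl), zero_add]
        · rw [Finset.sum_pair hac, if_neg hab, if_neg hac, if_neg hbc.symm,
            if_pos (show c = c from rfl), zero_add]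
        · rw [Finset.sum_pair hbc, if_pos (show b = b from rfl), if_neg hbc.symm,
            if_pos (show c = c from rfl)]
          exact z2_tri' _ _ _ h
    exact z2_iff _ _ hiff2
  have hcard3 : ∀ j : K, (Finset.univ.erase j).card = 3 := by
    intro j
    rw [Finset.card_erase_of_mem (Finset.mem_univ j), Finset.card_univ, hK]
  have step1 : ∑ j : K, α (Finset.univ.erase j)
      = ∑ j : K, ∑ I ∈ (Finset.univ.erase j).powersetCard 2, S I :=
    Finset.sum_congr rfl fun j _ => key _ (hcard3 j)
  have step2 : ∀ j : K, (Finset.univ.erase j).powersetCard 2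
      = (Finset.univ.powersetCard 2).filter (fun I => j ∉ I) := by
    intro j
    ext I
    simp only [Finset.mem_powersetCard, Finset.mem_filter, Finset.subset_erase]
    tauto
  rw [step1]
  have step3 : ∑ j : K, ∑ I ∈ (Finset.univ.erase j).powersetCard 2, S I
      = ∑ I ∈ Finset.univ.powersetCard 2, ∑ j : K, if j ∉ I then S I else 0 := by
    rw [Finset.sum_comm]
    refine Finset.sum_congr rfl fun j _ => ?_
    rw [step2 j, Finset.sum_filter]
  rw [step3]
  refine Finset.sum_eq_zero fun I hI => ?_
  have hI2 : I.card = 2 := (Finset.mem_powersetCard_univ).mp hI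
  rw [Finset.sum_ite, Finset.sum_const, Finset.sum_const_zero, add_zero]
  have hfc : Finset.univ.filter (fun j => j ∉ I) = Iᶜ := by
    ext x; simp
  rw [hfc, Finset.card_compl, hI2, hK, (by norm_num : (4 - 2 : ℕ) = 2), two_smul]
  exact z2_self _
end
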